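/- arXiv:2104.03889 — 3 statements merged into one kernel-verified Lean document; each statement's English description precedes it below -/
import Mathlib

section
/- Global bias-robustness of the Kernel Score posterior: Assume the prior density π is bounded over Θ and the kernel k satisfies 0 ≤ sup_{x,y∈X} k(x,y) ≤ κ < ∞. Then for any fixed dataset y_1,…,y_n, the Kernel Score posterior π_{S_k}(·|y_1,…,y_n) is globally bias-robust, i.e. sup_{θ∈Θ} sup_{z∈X} |PIF(z, θ, P̂_n)| < ∞. -/
/-!
For fixed data the contaminated posterior density is an exponential tilt
`g θ * exp (ε * h θ) / ∫ g * exp (ε * h)` of the uncontaminated one, with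
`h θ = w n (n⁻¹ ∑ S_k(P_θ, yᵢ) - S_k(P_θ, z))`. A kernel bounded by `κ` on `X` gives
`|S_k(P_θ, v)| ≤ 3κ` for `v ∈ X`, hence `|h| ≤ 6 w n κ` and `g ≤ (sup π) exp (3 w n κ)` on `Θ`,
uniformly in `θ` and `z`. Differentiating the quotient at `ε = 0` under the integral gives
`|PIF| ≤ 2 g(θ) · 6 w n κ / ∫_Θ g`.

Measurability of `g` and `h` in `θ` is not available. When the normaliser is integrable for two
values of `ε`, measurable versions of `g` and `h` are recovered from the two tilts; otherwise the
normaliser is the junk value `0` near `ε = 0` and the derivative vanishes.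
-/

open MeasureTheory Filter Topology Real

lemma deriv_eq_zero_of_eventuallyEq_zero_nhdsNE {𝕜 F : Type*} [NontriviallyNormedField 𝕜]
    [NormedAddCommGroup F] [NormedSpace 𝕜 F] {f : 𝕜 → F} {x : 𝕜} (hf : f =ᶠ[𝓝[≠] x] 0) :
    deriv f x = 0 := by
  by_cases hd : DifferentiableAt 𝕜 f x
  · have hf' : f =ᶠ[𝓝 x] 0 :=
      (hd.continuousAt.eventuallyEq_nhds_iff_eventuallyEq_nhdsNE continuous_zero.continuousAt).1 hf
    rw [hf'.deriv_eq, Pi.zero_def, deriv_const]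
  · exact deriv_zero_of_not_differentiableAt hd

lemma abs_deriv_mul_exp_div_le {D : ℝ → ℝ} {D' a b M : ℝ} (hD : HasDerivAt D D' 0)
    (hD0 : 0 < D 0) (hD' : |D'| ≤ M * D 0) (ha : 0 ≤ a) (hb : |b| ≤ M) :
    |deriv (fun ε => a * exp (ε * b) / D ε) 0| ≤ 2 * a * M / D 0 := by
  have hN : HasDerivAt (fun ε => a * exp (ε * b)) (a * (exp (0 * b) * b)) 0 :=
    (hasDerivAt_mul_const b).exp.const_mul a
  rw [(hN.fun_div hD hD0.ne').deriv, zero_mul, exp_zero, one_mul, mul_one, abs_div,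
    abs_of_pos (pow_pos hD0 2), div_le_div_iff₀ (pow_pos hD0 2) hD0]
  calc |a * b * D 0 - a * D'| * D 0 ≤ (a * (M * D 0) + a * (M * D 0)) * D 0 := by
        gcongr
        refine (abs_sub _ _).trans (add_le_add ?_ ?_)
        · rw [abs_mul, abs_mul, abs_of_nonneg ha, abs_of_pos hD0, ← mul_assoc]; gcongr
        · rw [abs_mul, abs_of_nonneg ha]; gcongr
    _ = 2 * a * M * D 0 ^ 2 := by ring

section ExponentialTilt

variable {α : Type*} [MeasurableSpace α] {μ : Measure α} {M : ℝ}

lemma integrable_mul_exp_mul {G H : α → ℝ} (hG : Integrable G μ) (hH : AEStronglyMeasurable H μ)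
    (hHM : ∀ᵐ t ∂μ, |H t| ≤ M) (ε : ℝ) : Integrable (fun t => G t * exp (ε * H t)) μ := by
  refine (hG.norm.mul_const (exp (|ε| * M))).mono'
    (hG.1.mul (continuous_exp.comp_aestronglyMeasurable (hH.const_mul ε))) ?_
  filter_upwards [hHM] with t ht
  rw [norm_mul, norm_of_nonneg (exp_pos _).le]
  gcongr ‖G t‖ * exp ?_
  calc ε * H t ≤ |ε| * |H t| := (le_abs_self _).trans (abs_mul _ _).le
    _ ≤ |ε| * M := by gcongr

lemma hasDerivAt_integral_mul_exp_mul {G H : α → ℝ} (hG : Integrable G μ)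
    (hH : AEStronglyMeasurable H μ) (hHM : ∀ᵐ t ∂μ, |H t| ≤ M) (x₀ : ℝ) :
    HasDerivAt (fun ε => ∫ t, G t * exp (ε * H t) ∂μ)
      (∫ t, G t * (exp (x₀ * H t) * H t) ∂μ) x₀ := by
  have hexp : ∀ ε, AEStronglyMeasurable (fun t => exp (ε * H t)) μ := fun ε =>
    continuous_exp.comp_aestronglyMeasurable (hH.const_mul ε)
  refine (hasDerivAt_integral_of_dominated_loc_of_deriv_le (Metric.ball_mem_nhds x₀ one_pos)
    (Eventually.of_forall fun ε => hG.1.mul (hexp ε)) (integrable_mul_exp_mul hG hH hHM x₀)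
    (hG.1.mul ((hexp x₀).mul hH)) (bound := fun t => ‖G t‖ * (exp ((|x₀| + 1) * M) * M)) ?_
    (hG.norm.mul_const _) (ae_of_all _ fun t ε _ =>
      ((hasDerivAt_mul_const (H t)).exp.const_mul (G t)))).2
  filter_upwards [hHM] with t ht ε hε
  have hε' : |ε| ≤ |x₀| + 1 := by
    have := abs_sub_abs_le_abs_sub ε x₀
    rw [Metric.mem_ball, Real.dist_eq] at hε
    linarith
  rw [norm_mul, norm_mul, norm_of_nonneg (exp_pos _).le, Real.norm_eq_abs (H t)]
  gcongr ‖G t‖ * (exp ?_ * ?_)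
  calc ε * H t ≤ |ε| * |H t| := (le_abs_self _).trans (abs_mul _ _).le
    _ ≤ (|x₀| + 1) * M := mul_le_mul hε' ht (abs_nonneg _) (by positivity)

-- On `{g ≠ 0}` the exponent is recovered from two tilts as `log (F₂ / F₁) / (ε₂ - ε₁)`;
-- on `{g = 0}` the junk values `x / 0 = 0` and `log 0 = 0` make this `0`.
lemma exists_measurable_mul_exp_ae_eq {g h : α → ℝ} (hM : 0 ≤ M) (hhM : ∀ᵐ t ∂μ, |h t| ≤ M)
    {ε₁ ε₂ : ℝ} (hne : ε₁ ≠ ε₂)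
    (h₁ : AEStronglyMeasurable (fun t => g t * exp (ε₁ * h t)) μ)
    (h₂ : AEStronglyMeasurable (fun t => g t * exp (ε₂ * h t)) μ) :
    ∃ G H : α → ℝ, Measurable G ∧ Measurable H ∧
      ∀ᵐ t ∂μ, |H t| ≤ M ∧ ∀ ε, g t * exp (ε * h t) = G t * exp (ε * H t) := by
  obtain ⟨F₁, hF₁, hgF₁⟩ := h₁.aemeasurable
  obtain ⟨F₂, hF₂, hgF₂⟩ := h₂.aemeasurable
  set H := fun t => log (F₂ t / F₁ t) / (ε₂ - ε₁)
  have hHm : Measurable H := (hF₂.div hF₁).log.div_const _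
  refine ⟨fun t => F₁ t * exp (-(ε₁ * H t)), H, hF₁.mul (hHm.const_mul ε₁).neg.exp, hHm, ?_⟩
  filter_upwards [hgF₁, hgF₂, hhM] with t e₁ e₂ ht
  by_cases hg : g t = 0
  · have hF₁ : F₁ t = 0 := by rw [← e₁, hg, zero_mul]
    simp [H, hF₁, hg, hM]
  · have hH : H t = h t := by
      simp only [H]
      rw [← e₁, ← e₂, mul_div_mul_left _ _ hg, ← exp_sub, ← sub_mul, log_exp,
        mul_div_cancel_left₀ _ (sub_ne_zero.2 hne.symm)]
    refine ⟨hH ▸ ht, fun ε => ?_⟩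
    rw [hH, ← e₁, mul_assoc, mul_assoc, ← exp_add, ← exp_add]
    ring_nf

lemma abs_deriv_mul_exp_div_integral_le_of_integrable {G H : α → ℝ} (hG : Integrable G μ)
    (hG0 : 0 ≤ᵐ[μ] G) (hH : AEStronglyMeasurable H μ) (hHM : ∀ᵐ t ∂μ, |H t| ≤ M) {a b : ℝ}
    (ha : 0 ≤ a) (hb : |b| ≤ M) :
    |deriv (fun ε => a * exp (ε * b) / ∫ t, G t * exp (ε * H t) ∂μ) 0|
      ≤ 2 * a * M / ∫ t, G t ∂μ := by
  rcases (integral_nonneg_of_ae hG0).eq_or_lt with hzero | hpos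
  · have hGz : G =ᵐ[μ] 0 := (integral_eq_zero_iff_of_nonneg_ae hG0 hG).1 hzero.symm
    have hDz : ∀ ε, ∫ t, G t * exp (ε * H t) ∂μ = 0 := fun ε =>
      integral_eq_zero_of_ae (hGz.mono fun t ht => by simp [ht])
    simp [hDz, ← hzero]
  have hD0 : ∫ t, G t ∂μ = ∫ t, G t * exp (0 * H t) ∂μ := by simp
  rw [hD0] at hpos ⊢
  refine abs_deriv_mul_exp_div_le (hasDerivAt_integral_mul_exp_mul hG hH hHM 0) hpos ?_ ha hb
  simp only [zero_mul, exp_zero, one_mul, mul_one]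
  calc |∫ t, G t * H t ∂μ| ≤ ∫ t, M * G t ∂μ := by
        rw [← Real.norm_eq_abs]
        refine norm_integral_le_of_norm_le (hG.const_mul M) ?_
        filter_upwards [hG0, hHM] with t hGt hHt
        rw [norm_mul, Real.norm_eq_abs, Real.norm_eq_abs, abs_of_nonneg hGt, mul_comm M]
        exact mul_le_mul_of_nonneg_left hHt hGt
    _ = M * ∫ t, G t ∂μ := integral_const_mul M G

theorem abs_deriv_mul_exp_div_integral_le {g h : α → ℝ} (hg : ∀ t, 0 ≤ g t)
    (hhM : ∀ᵐ t ∂μ, |h t| ≤ M) {a b : ℝ} (ha : 0 ≤ a) (hb : |b| ≤ M) :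
    |deriv (fun ε => a * exp (ε * b) / ∫ t, g t * exp (ε * h t) ∂μ) 0|
      ≤ 2 * a * M / ∫ t, g t ∂μ := by
  have hM : 0 ≤ M := (abs_nonneg b).trans hb
  by_cases htwo : ∃ ε₁ ε₂, ε₁ ≠ ε₂ ∧ Integrable (fun t => g t * exp (ε₁ * h t)) μ ∧
      Integrable (fun t => g t * exp (ε₂ * h t)) μ
  · obtain ⟨ε₁, ε₂, hne, hi₁, hi₂⟩ := htwo
    obtain ⟨G, H, hGm, hHm, hGH⟩ := exists_measurable_mul_exp_ae_eq hM hhM hne hi₁.1 hi₂.1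
    have hgG : ∀ᵐ t ∂μ, g t = G t := hGH.mono fun t ht => by simpa using ht.2 0
    have hHM : ∀ᵐ t ∂μ, |H t| ≤ M := hGH.mono fun t ht => ht.1
    have hGint : Integrable G μ := by
      refine (integrable_mul_exp_mul (hi₁.congr (hGH.mono fun t ht => ht.2 ε₁))
        hHm.aestronglyMeasurable hHM (-ε₁)).congr (ae_of_all _ fun t => ?_)
      simp only [mul_assoc, ← exp_add]
      simp
    rw [integral_congr_ae hgG]
    simp_rw [fun ε => integral_congr_ae (hGH.mono fun t ht => ht.2 ε)]
    exact abs_deriv_mul_exp_div_integral_le_of_integrable hGint (hgG.mono fun t ht => ht ▸ hg t)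
      hHm.aestronglyMeasurable hHM ha hb
  · push Not at htwo
    have hfin : {ε | Integrable (fun t => g t * exp (ε * h t)) μ}.Finite :=
      Set.Subsingleton.finite fun ε₁ h₁ ε₂ h₂ => by_contra fun hne => htwo ε₁ ε₂ hne h₁ h₂
    rw [deriv_eq_zero_of_eventuallyEq_zero_nhdsNE, abs_zero]
    · have := integral_nonneg (μ := μ) (f := g) hg
      positivity
    filter_upwards [hfin.eventually_cofinite_notMem.filter_mono (nhdsNE_le_cofinite 0)] with ε hε
    rw [Pi.zero_apply, integral_undef hε, div_zero]

end ExponentialTilt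

lemma ae_mem_of_subset_of_measure_eq_one {α : Type*} [MeasurableSpace α] {μ : Measure α}
    [IsProbabilityMeasure μ] {s t : Set α} (ht : MeasurableSet t) (hst : s ⊆ t) (hs : μ s = 1) :
    ∀ᵐ x ∂μ, x ∈ t :=
  mem_ae_iff.2 <| (prob_compl_eq_zero_iff ht).2 <|
    le_antisymm prob_le_one (hs ▸ measure_mono hst)

lemma abs_integral_le_of_measure_eq_one {α : Type*} [MeasurableSpace α] {μ : Measure α}
    [IsProbabilityMeasure μ] {s : Set α} {f : α → ℝ} {C : ℝ} (hf : Measurable f)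
    (hs : μ s = 1) (hfC : ∀ x ∈ s, |f x| ≤ C) : |∫ x, f x ∂μ| ≤ C := by
  have hae : ∀ᵐ x ∂μ, x ∈ {x | ‖f x‖ ≤ C} :=
    ae_mem_of_subset_of_measure_eq_one (measurableSet_le hf.norm measurable_const) hfC hs
  simpa using norm_integral_le_of_norm_le_const hae

lemma abs_kernelScore_le {E : Type*} [MeasurableSpace E] {Q : Measure E} [IsProbabilityMeasure Q]
    {X : Set E} (hQ : Q X = 1) {k : E → E → ℝ} (hk : Measurable (Function.uncurry k)) {κ : ℝ}
    (hkκ : ∀ x ∈ X, ∀ y ∈ X, |k x y| ≤ κ) {v : E} (hv : v ∈ X) :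
    |(∫ x, ∫ x', k x x' ∂Q ∂Q) - 2 * ∫ x, k x v ∂Q| ≤ 3 * κ := by
  have hdouble : |∫ x, ∫ x', k x x' ∂Q ∂Q| ≤ κ :=
    abs_integral_le_of_measure_eq_one
      (hk.stronglyMeasurable.integral_prod_right' (ν := Q)).measurable hQ fun x hx =>
        abs_integral_le_of_measure_eq_one hk.of_uncurry_left hQ (hkκ x hx)
  have hsingle : |∫ x, k x v ∂Q| ≤ κ :=
    abs_integral_le_of_measure_eq_one hk.of_uncurry_right hQ fun x hx => hkκ x hx v hv
  rw [abs_le] at hdouble hsingle ⊢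
  constructor <;> linarith [hdouble.1, hdouble.2, hsingle.1, hsingle.2]

lemma abs_inv_mul_sum_le {n : ℕ} (hn : 0 < n) {s : Fin n → ℝ} {C : ℝ} (hs : ∀ i, |s i| ≤ C) :
    |(n : ℝ)⁻¹ * ∑ i, s i| ≤ C := by
  rw [abs_mul, abs_inv, Nat.abs_cast, inv_mul_le_iff₀ (by positivity)]
  calc |∑ i, s i| ≤ ∑ i, |s i| := Finset.abs_sum_le_sum_abs _ _
    _ ≤ ∑ _i : Fin n, C := Finset.sum_le_sum fun i _ => hs i
    _ = n * C := by simp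

theorem kernel_score_posterior_globally_bias_robust_general
    {d p : ℕ}
    (X : Set (EuclideanSpace ℝ (Fin d)))
    (Θ : Set (Fin p → ℝ)) (hΘ : MeasurableSet Θ)
    (P : (Fin p → ℝ) → Measure (EuclideanSpace ℝ (Fin d)))
    [∀ θ, IsProbabilityMeasure (P θ)]
    (hP_supp : ∀ θ ∈ Θ, P θ X = 1)
    (k : EuclideanSpace ℝ (Fin d) → EuclideanSpace ℝ (Fin d) → ℝ)
    (hk_meas : Measurable (Function.uncurry k))
    (κ : ℝ)
    (hk_bdd : ∀ x ∈ X, ∀ y ∈ X, |k x y| ≤ κ)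
    (Sk : (Fin p → ℝ) → EuclideanSpace ℝ (Fin d) → ℝ)
    (hSk : ∀ θ y, Sk θ y =
      (∫ x, ∫ x', k x x' ∂(P θ) ∂(P θ)) - 2 * ∫ x, k x y ∂(P θ))
    (prior : (Fin p → ℝ) → ℝ)
    (hprior_nonneg : ∀ θ, 0 ≤ prior θ)
    (hprior_bdd : ∃ Cπ : ℝ, ∀ θ ∈ Θ, prior θ ≤ Cπ)
    (w : ℝ) (hw : 0 < w)
    (n : ℕ) (hn : 0 < n)
    (y : Fin n → EuclideanSpace ℝ (Fin d)) (hy : ∀ i, y i ∈ X) :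
    ∃ C : ℝ, ∀ θ ∈ Θ, ∀ z ∈ X,
      |deriv (fun ε : ℝ =>
          prior θ * Real.exp (-(w * n) *
              ((1 - ε) * ((n : ℝ)⁻¹ * ∑ i, Sk θ (y i)) + ε * Sk θ z)) /
            ∫ θ' in Θ, prior θ' * Real.exp (-(w * n) *
              ((1 - ε) * ((n : ℝ)⁻¹ * ∑ i, Sk θ' (y i)) + ε * Sk θ' z))) 0| ≤ C := by
  obtain ⟨Cπ, hCπ⟩ := hprior_bdd
  obtain ⟨A, hA_def⟩ : ∃ A : (Fin p → ℝ) → ℝ, ∀ θ, (n : ℝ)⁻¹ * ∑ i, Sk θ (y i) = A θ :=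
    ⟨_, fun _ => rfl⟩
  simp only [hA_def]
  set c : ℝ := w * n
  have hc : 0 < c := by positivity
  have hS : ∀ θ ∈ Θ, ∀ v ∈ X, |Sk θ v| ≤ 3 * κ := fun θ hθ v hv =>
    hSk θ v ▸ abs_kernelScore_le (hP_supp θ hθ) hk_meas hk_bdd hv
  have hA : ∀ θ ∈ Θ, |A θ| ≤ 3 * κ := fun θ hθ =>
    hA_def θ ▸ abs_inv_mul_sum_le hn fun i => hS θ hθ _ (hy i)
  set g : (Fin p → ℝ) → ℝ := fun θ => prior θ * exp (-c * A θ)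
  have hg_nonneg : ∀ θ, 0 ≤ g θ := fun θ => mul_nonneg (hprior_nonneg θ) (exp_pos _).le
  have hg_le : ∀ θ ∈ Θ, g θ ≤ Cπ * exp (c * (3 * κ)) := fun θ hθ =>
    mul_le_mul (hCπ θ hθ) (exp_le_exp.2 (by nlinarith [neg_abs_le (A θ), hA θ hθ]))
      (exp_pos _).le ((hprior_nonneg θ).trans (hCπ θ hθ))
  refine ⟨2 * (Cπ * exp (c * (3 * κ))) * (c * (6 * κ)) / ∫ θ in Θ, g θ, fun θ hθ z hz => ?_⟩
  have hh : ∀ θ ∈ Θ, |c * (A θ - Sk θ z)| ≤ c * (6 * κ) := fun θ hθ => by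
    rw [abs_mul, abs_of_pos hc]
    gcongr
    linarith [abs_sub (A θ) (Sk θ z), hA θ hθ, hS θ hθ z hz]
  have htilt : ∀ q a b ε : ℝ, q * exp (-c * ((1 - ε) * a + ε * b)) =
      q * exp (-c * a) * exp (ε * (c * (a - b))) := fun q a b ε => by
    rw [mul_assoc, ← exp_add]
    ring_nf
  simp_rw [htilt]
  refine (abs_deriv_mul_exp_div_integral_le hg_nonneg (ae_restrict_of_forall_mem hΘ hh)
    (hg_nonneg θ) (hh θ hθ)).trans ?_
  have := integral_nonneg (μ := volume.restrict Θ) (f := g) hg_nonneg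
  have := (abs_nonneg _).trans (hh θ hθ)
  gcongr 2 * ?_ * _ / _
  exact hg_le θ hθ

/-- Global bias-robustness of the Kernel Score posterior (Theorem 3.1 of the paper).
The prior density is bounded over `Θ` and the kernel `k` is bounded by `κ` on the
data space `X`.  For a fixed dataset `y₁,…,y_n ∈ X`, the contaminated loss is
`L(θ, P̂_{n,ε,z}) = (1-ε)·(1/n)∑ᵢ S_k(P_θ, yᵢ) + ε·S_k(P_θ, z)` and the posterior
influence function `PIF(z, θ, P̂_n)` is the derivative at `ε = 0` of the posterior
density `π(θ) exp(-w n L(θ, P̂_{n,ε,z})) / ∫_Θ π(θ') exp(-w n L(θ', P̂_{n,ε,z})) dθ'`.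
Conclusion: `sup_{θ∈Θ} sup_{z∈X} |PIF(z, θ, P̂_n)| < ∞`. -/
theorem kernel_score_posterior_globally_bias_robust
    {d p : ℕ}
    (X : Set (EuclideanSpace ℝ (Fin d)))
    (Θ : Set (Fin p → ℝ)) (hΘ : MeasurableSet Θ)
    (P : (Fin p → ℝ) → Measure (EuclideanSpace ℝ (Fin d)))
    [∀ θ, IsProbabilityMeasure (P θ)]
    (hP_supp : ∀ θ ∈ Θ, P θ X = 1)
    (k : EuclideanSpace ℝ (Fin d) → EuclideanSpace ℝ (Fin d) → ℝ)
    (hk_meas : Measurable (Function.uncurry k))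
    (hk_symm : ∀ x y, k x y = k y x)
    (κ : ℝ) (hκ : 0 ≤ κ)
    (hk_bdd : ∀ x ∈ X, ∀ y ∈ X, |k x y| ≤ κ)
    (Sk : (Fin p → ℝ) → EuclideanSpace ℝ (Fin d) → ℝ)
    (hSk : ∀ θ y, Sk θ y =
      (∫ x, ∫ x', k x x' ∂(P θ) ∂(P θ)) - 2 * ∫ x, k x y ∂(P θ))
    (prior : (Fin p → ℝ) → ℝ) (hprior_meas : Measurable prior)
    (hprior_nonneg : ∀ θ, 0 ≤ prior θ)
    (hprior_bdd : ∃ Cπ : ℝ, ∀ θ ∈ Θ, prior θ ≤ Cπ)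
    (w : ℝ) (hw : 0 < w)
    (n : ℕ) (hn : 0 < n)
    (y : Fin n → EuclideanSpace ℝ (Fin d)) (hy : ∀ i, y i ∈ X) :
    ∃ C : ℝ, ∀ θ ∈ Θ, ∀ z ∈ X,
      |deriv (fun ε : ℝ =>
          prior θ * Real.exp (-(w * n) *
              ((1 - ε) * ((n : ℝ)⁻¹ * ∑ i, Sk θ (y i)) + ε * Sk θ z)) /
            ∫ θ' in Θ, prior θ' * Real.exp (-(w * n) *
              ((1 - ε) * ((n : ℝ)⁻¹ * ∑ i, Sk θ' (y i)) + ε * Sk θ' z))) 0| ≤ C :=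
  kernel_score_posterior_globally_bias_robust_general X Θ hΘ P hP_supp k hk_meas κ hk_bdd Sk hSk
    prior hprior_nonneg hprior_bdd w hw n hn y hy
end

section
/- Concentration of the kernel score empirical loss (via McDiarmid's inequality): Let k be a kernel with |k(x,y)| ≤ κ for all x,y ∈ X, let L(θ, Y_1,…,Y_n) = E_{X,X'∼P_θ}[k(X,X')] − (2/n) Σ_{i=1}^n E_{X∼P_θ}[k(X, Y_i)] + (1/(n(n−1))) Σ_{i≠j} k(Y_i, Y_j), and let D_k(P_θ, P_0) be the divergence associated to the kernel score. Then for Y_1,…,Y_n i.i.d. with law P_0 and any δ ∈ (0,1], P_0( |L(θ, Y_1,…,Y_n) − D_k(P_θ, P_0)| ≤ √( −(32κ²/n) log(δ/2) ) ) ≥ 1 − δ. -/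
open MeasureTheory Finset
open scoped ENNReal

section KernelScoreAux
open Real



/-- Core analytic inequality behind Hoeffding's lemma. -/
lemma hoeffding_core (p : ℝ) (hp0 : 0 ≤ p) (hp1 : p ≤ 1) (h : ℝ) :
    (1 - p) + p * Real.exp h ≤ Real.exp (p * h + h ^ 2 / 8) := by
  set q : ℝ → ℝ := fun x => (1 - p) + p * Real.exp x with hq
  have hqpos : ∀ x, 0 < q x := by
    intro x
    rcases eq_or_lt_of_le hp0 with h0 | h0
    · simp [hq, ← h0]
    · have : 0 < p * Real.exp x := mul_pos h0 (Real.exp_pos x)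
      have : (0:ℝ) ≤ 1 - p := by linarith
      simp only [hq]; nlinarith [Real.exp_pos x]
  set φ : ℝ → ℝ := fun x => p * x + x ^ 2 / 8 - Real.log (q x) with hφ
  set ψ : ℝ → ℝ := fun x => p + x / 4 - p * Real.exp x / q x with hψ
  have hq' : ∀ x, HasDerivAt q (p * Real.exp x) x := by
    intro x
    exact ((Real.hasDerivAt_exp x).const_mul p).const_add (1 - p)
  have hφ' : ∀ x, HasDerivAt φ (ψ x) x := by
    intro x
    have hlog : HasDerivAt (fun x => Real.log (q x)) (p * Real.exp x / q x) x :=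
      (hq' x).log (hqpos x).ne'
    have h1 : HasDerivAt (fun x : ℝ => p * x + x ^ 2 / 8) (p + x / 4) x := by
      have := ((hasDerivAt_pow 2 x).div_const 8).const_add (p * x)
      have h2 : HasDerivAt (fun y : ℝ => p * y) p x := by
        simpa using (hasDerivAt_id x).const_mul p
      exact (h2.add ((hasDerivAt_pow 2 x).div_const 8)).congr_deriv (by norm_num <;> ring)
    exact h1.sub hlog
  have hψ' : ∀ x, HasDerivAt ψ (1 / 4 - (p * Real.exp x * q x - p * Real.exp x * (p * Real.exp x)) / q x ^ 2) x := by
    intro x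
    have hdiv : HasDerivAt (fun x => p * Real.exp x / q x)
        ((p * Real.exp x * q x - p * Real.exp x * (p * Real.exp x)) / q x ^ 2) x :=
      ((Real.hasDerivAt_exp x).const_mul p).div (hq' x) (hqpos x).ne'
    have h1 : HasDerivAt (fun x : ℝ => p + x / 4) (1 / 4) x := by
      simpa using ((hasDerivAt_id x).div_const 4).const_add p
    exact h1.sub hdiv
  have hψmono : Monotone ψ := by
    have hdiff : Differentiable ℝ ψ := fun x => (hψ' x).differentiableAt
    refine monotone_of_deriv_nonneg hdiff ?_
    intro x
    rw [(hψ' x).deriv]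
    have hqx := hqpos x
    have hex := Real.exp_pos x
    have key : p * Real.exp x * (1 - p) ≤ q x ^ 2 / 4 := by
      have := sq_nonneg ((1 - p) - p * Real.exp x)
      simp only [hq]; nlinarith
    rw [sub_nonneg, div_le_iff₀ (by positivity)]
    simp only [hq] at *
    nlinarith
  have hψ0 : ψ 0 = 0 := by
    simp [hψ, hq]
  have hφ0 : φ 0 = 0 := by simp [hφ, hq]
  have hφcont : Continuous φ := by
    have : Differentiable ℝ φ := fun x => (hφ' x).differentiableAt
    exact this.continuous
  have hφnonneg : 0 ≤ φ h := by
    rcases le_total 0 h with hh | hh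
    · have hmono : MonotoneOn φ (Set.Ici (0:ℝ)) := by
        refine monotoneOn_of_deriv_nonneg (convex_Ici 0) hφcont.continuousOn
          (fun x _ => (hφ' x).differentiableAt.differentiableWithinAt) ?_
        intro x hx
        rw [(hφ' x).deriv]
        have : ψ 0 ≤ ψ x := hψmono (le_of_lt (by simpa using hx))
        linarith [hψ0 ▸ this]
      have := hmono (Set.mem_Ici.2 le_rfl) (Set.mem_Ici.2 hh) hh
      linarith [hφ0 ▸ this]
    · have hmono : AntitoneOn φ (Set.Iic (0:ℝ)) := by
        refine antitoneOn_of_deriv_nonpos (convex_Iic 0) hφcont.continuousOn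
          (fun x _ => (hφ' x).differentiableAt.differentiableWithinAt) ?_
        intro x hx
        rw [(hφ' x).deriv]
        have : ψ x ≤ ψ 0 := hψmono (le_of_lt (by simpa using hx))
        linarith [hψ0 ▸ this]
      have := hmono (Set.mem_Iic.2 hh) (Set.mem_Iic.2 le_rfl) hh
      linarith [hφ0 ▸ this]
  have : Real.log (q h) ≤ p * h + h ^ 2 / 8 := by
    simp only [hφ] at hφnonneg; linarith
  calc q h = Real.exp (Real.log (q h)) := (Real.exp_log (hqpos h)).symm
    _ ≤ Real.exp (p * h + h ^ 2 / 8) := Real.exp_le_exp.2 this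



lemma integrable_of_abs_le {Ω : Type*} [MeasurableSpace Ω] (μ : Measure Ω) [IsFiniteMeasure μ]
    {f : Ω → ℝ} (hf : AEStronglyMeasurable f μ) (M : ℝ) (h : ∀ x, |f x| ≤ M) :
    Integrable f μ :=
  (integrable_const M).mono' hf (Filter.Eventually.of_forall (fun x => by
    simpa using h x))

/-- Hoeffding's lemma. -/
lemma hoeffding_lemma {Ω : Type*} [MeasurableSpace Ω] (μ : Measure Ω) [IsProbabilityMeasure μ]
    (X : Ω → ℝ) (hX : AEStronglyMeasurable X μ) (a b : ℝ)
    (hab : ∀ ω, X ω ∈ Set.Icc a b) (hmean : ∫ ω, X ω ∂μ = 0) (t : ℝ) :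
    ∫ ω, Real.exp (t * X ω) ∂μ ≤ Real.exp (t ^ 2 * (b - a) ^ 2 / 8) := by
  have hne : Nonempty Ω := by
    by_contra h
    haveI := not_nonempty_iff.1 h
    have : μ Set.univ = 1 := measure_univ
    simp [Set.univ_eq_empty_iff.2 ‹IsEmpty Ω›] at this
  obtain ⟨ω₀⟩ := hne
  have hXint : Integrable X μ :=
    integrable_of_abs_le μ hX (max |a| |b|) (fun ω => by
      rcases hab ω with ⟨h1, h2⟩
      rw [abs_le]
      constructor
      · exact le_trans (neg_le_neg (le_max_left |a| |b|)) (by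
          have := neg_abs_le a; linarith)
      · exact le_trans h2 (le_trans (le_abs_self b) (le_max_right _ _)))
  have ha0 : a ≤ 0 := by
    have : ∫ _, a ∂μ ≤ ∫ ω, X ω ∂μ :=
      integral_mono (integrable_const a) hXint (fun ω => (hab ω).1)
    simpa [hmean] using this
  have hb0 : 0 ≤ b := by
    have : ∫ ω, X ω ∂μ ≤ ∫ _, b ∂μ :=
      integral_mono hXint (integrable_const b) (fun ω => (hab ω).2)
    simpa [hmean] using this
  rcases eq_or_lt_of_le (ha0.trans hb0) with hab' | hab'
  · -- a = b, hence a = b = 0 and X = 0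
    have ha : a = 0 := le_antisymm ha0 (hab' ▸ hb0)
    have hb : b = 0 := hab' ▸ ha
    have hX0 : ∀ ω, X ω = 0 := fun ω => le_antisymm (hb ▸ (hab ω).2) (ha ▸ (hab ω).1)
    simp [hX0, ha, hb]
  · -- a < b
    set p := -a / (b - a) with hp
    have hba : 0 < b - a := by linarith
    have hp0 : 0 ≤ p := div_nonneg (by linarith) hba.le
    have hp1 : p ≤ 1 := by
      rw [hp, div_le_one hba]; linarith
    have hconv : ∀ ω, Real.exp (t * X ω) ≤
        (b - X ω) / (b - a) * Real.exp (t * a) + (X ω - a) / (b - a) * Real.exp (t * b) := by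
      intro ω
      rcases hab ω with ⟨h1, h2⟩
      have hα : 0 ≤ (b - X ω) / (b - a) := div_nonneg (by linarith) hba.le
      have hβ : 0 ≤ (X ω - a) / (b - a) := by
        apply div_nonneg _ hba.le; linarith
      have hsum : (b - X ω) / (b - a) + (X ω - a) / (b - a) = 1 := by
        field_simp
        ring
      have := convexOn_exp.2 (Set.mem_univ (t * a)) (Set.mem_univ (t * b)) hα hβ hsum
      simp only [smul_eq_mul] at this
      have harg : (b - X ω) / (b - a) * (t * a) + (X ω - a) / (b - a) * (t * b) = t * X ω := by
        field_simp; ring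
      rw [harg] at this
      exact this
    have hint_rhs : Integrable (fun ω => (b - X ω) / (b - a) * Real.exp (t * a)
        + (X ω - a) / (b - a) * Real.exp (t * b)) μ := by
      apply Integrable.add
      · exact ((((integrable_const b).sub hXint).div_const _).mul_const _)
      · exact (((hXint.sub (integrable_const a)).div_const _).mul_const _)
    have hint_lhs : Integrable (fun ω => Real.exp (t * X ω)) μ := by
      apply integrable_of_abs_le μ
        (Real.continuous_exp.comp_aestronglyMeasurable (hX.const_mul t))
        (Real.exp (|t| * max |a| |b|))
      intro ω
      rw [abs_of_pos (Real.exp_pos _), Real.exp_le_exp]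
      calc t * X ω ≤ |t * X ω| := le_abs_self _
        _ = |t| * |X ω| := abs_mul _ _
        _ ≤ |t| * max |a| |b| := by
            apply mul_le_mul_of_nonneg_left _ (abs_nonneg t)
            rcases hab ω with ⟨h1, h2⟩
            rw [abs_le]
            constructor
            · have := neg_abs_le a; have := le_max_left |a| |b|; linarith
            · have := le_abs_self b; have := le_max_right |a| |b|; linarith
    have hstep : ∫ ω, Real.exp (t * X ω) ∂μ ≤ (1 - p) * Real.exp (t * a) + p * Real.exp (t * b) := by
      have hmono := integral_mono hint_lhs hint_rhs hconv
      refine hmono.trans (le_of_eq ?_)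
      have heq : ∀ ω, (b - X ω) / (b - a) * Real.exp (t * a) + (X ω - a) / (b - a) * Real.exp (t * b)
          = (Real.exp (t * a) / (b - a) * b - Real.exp (t * b) / (b - a) * a)
            + (Real.exp (t * b) / (b - a) - Real.exp (t * a) / (b - a)) * X ω := by
        intro ω; field_simp; ring
      rw [integral_congr_ae (Filter.Eventually.of_forall heq),
        integral_add (integrable_const _) (hXint.const_mul _),
        integral_const_mul, hmean, integral_const]
      simp only [probReal_univ, measure_univ, ENNReal.toReal_one, one_smul, smul_eq_mul, mul_zero, add_zero]
      rw [hp]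
      field_simp
      ring
    refine hstep.trans ?_
    -- now apply the core inequality with h := t * (b - a)
    set h := t * (b - a) with hh
    have hb' : t * b = t * a + h := by rw [hh]; ring
    have key := hoeffding_core p hp0 hp1 h
    calc (1 - p) * Real.exp (t * a) + p * Real.exp (t * b)
        = Real.exp (t * a) * ((1 - p) + p * Real.exp h) := by
          rw [hb', Real.exp_add]; ring
      _ ≤ Real.exp (t * a) * Real.exp (p * h + h ^ 2 / 8) := by
          exact mul_le_mul_of_nonneg_left key (Real.exp_pos _).le
      _ = Real.exp (t * a + p * h + h ^ 2 / 8) := by rw [← Real.exp_add]; ring_nf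
      _ = Real.exp (t ^ 2 * (b - a) ^ 2 / 8) := by
          congr 1
          have hz : t * a + p * h = 0 := by
            rw [hp, hh]; field_simp; ring
          rw [hh] at hz ⊢
          linear_combination hz


lemma abs_integral_le_of_abs_le {Ω : Type*} [MeasurableSpace Ω] (μ : Measure Ω)
    [IsProbabilityMeasure μ] (f : Ω → ℝ) (M : ℝ) (h : ∀ x, |f x| ≤ M) :
    |∫ x, f x ∂μ| ≤ M := by
  rw [← Real.norm_eq_abs]
  have := norm_integral_le_of_norm_le_const (μ := μ) (f := f) (C := M)
    (Filter.Eventually.of_forall (fun x => by rw [Real.norm_eq_abs]; exact h x))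
  simpa [measure_univ] using this



variable {α : Type*} [MeasurableSpace α] [Nonempty α]

lemma measurable_fin_cons {n : ℕ} :
    Measurable (fun p : α × (Fin n → α) => (Fin.cons p.1 p.2 : Fin (n + 1) → α)) := by
  refine measurable_pi_iff.2 (fun i => ?_)
  induction i using Fin.cases with
  | zero => simpa using measurable_fst
  | succ j => simp only [Fin.cons_succ]; exact (measurable_pi_apply j).comp measurable_snd

/-- McDiarmid MGF bound on a finite product of copies of a probability measure. -/
lemma mcdiarmid_mgf (μ : Measure α) [IsProbabilityMeasure μ] :
    ∀ (n : ℕ) (f : (Fin n → α) → ℝ), Measurable f → ∀ (M : ℝ), (∀ y, |f y| ≤ M) →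
    ∀ (c : Fin n → ℝ),
      (∀ (i : Fin n) (y : Fin n → α) (z : α), |f (Function.update y i z) - f y| ≤ c i) →
    ∀ t : ℝ,
      ∫ y, Real.exp (t * (f y - ∫ x, f x ∂(Measure.pi fun _ : Fin n => μ)))
          ∂(Measure.pi fun _ : Fin n => μ)
        ≤ Real.exp (t ^ 2 * (∑ i, c i ^ 2) / 8) := by
  intro n
  induction n with
  | zero =>
    intro f hf M hM c hc t
    have hfy : ∀ y : Fin 0 → α, f y = f default := fun y => congrArg f (Subsingleton.elim y default)
    have : ∫ x, f x ∂(Measure.pi fun _ : Fin 0 => μ) = f default := by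
      rw [integral_congr_ae (Filter.Eventually.of_forall hfy)]
      simp
    simp [this, hfy]
  | succ n ih =>
    intro f hf M hM c hc t
    set P : Measure (Fin (n + 1) → α) := Measure.pi fun _ => μ with hP
    set Pn : Measure (Fin n → α) := Measure.pi fun _ => μ with hPn
    set e := MeasurableEquiv.piFinSuccAbove (fun _ : Fin (n + 1) => α) 0 with he
    have hmp : MeasurePreserving e P ((μ : Measure α).prod Pn) := by
      have := measurePreserving_piFinSuccAbove (fun _ : Fin (n + 1) => μ) 0
      exact this
    -- e.symm (a, y) = Fin.cons a y
    have hesymm : ∀ (a : α) (y : Fin n → α), e.symm (a, y) = Fin.cons a y := by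
      intro a y
      show (Fin.insertNthEquiv (fun _ => α) 0) (a, y) = Fin.cons a y
      simp [Fin.insertNthEquiv, Fin.insertNth_zero']
    set Ef := ∫ x, f x ∂P with hEf
    set g : (Fin n → α) → ℝ := fun y => ∫ a, f (Fin.cons a y) ∂μ with hg
    have hconsm : ∀ y : Fin n → α, Measurable (fun a : α => f (Fin.cons a y)) := by
      intro y
      exact hf.comp (measurable_fin_cons.comp (measurable_id.prodMk measurable_const))
    have hFm : Measurable (fun p : α × (Fin n → α) => f (Fin.cons p.1 p.2)) :=
      hf.comp measurable_fin_cons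
    have hgsm : StronglyMeasurable g := hFm.stronglyMeasurable.integral_prod_left'
    have hgM : ∀ y, |g y| ≤ M := fun y =>
      abs_integral_le_of_abs_le μ _ M (fun a => hM _)
    have hint : ∀ y : Fin n → α, Integrable (fun a => f (Fin.cons a y)) μ := fun y =>
      integrable_of_abs_le μ (hconsm y).aestronglyMeasurable M (fun a => hM _)
    have hgc : ∀ (j : Fin n) (y : Fin n → α) (z : α),
        |g (Function.update y j z) - g y| ≤ c j.succ := by
      intro j y z
      have hsub : g (Function.update y j z) - g y
          = ∫ a, (f (Fin.cons a (Function.update y j z)) - f (Fin.cons a y)) ∂μ :=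
        (integral_sub (hint _) (hint _)).symm
      rw [hsub]
      refine abs_integral_le_of_abs_le μ _ _ (fun a => ?_)
      rw [Fin.cons_update]
      exact hc j.succ (Fin.cons a y) z
    have hFint : Integrable (fun p : α × (Fin n → α) => f (Fin.cons p.1 p.2)) (μ.prod Pn) :=
      integrable_of_abs_le _ hFm.aestronglyMeasurable M (fun p => hM _)
    have hEfg : ∫ y, g y ∂Pn = Ef := by
      rw [hEf]
      have h1 : ∫ p, f (e.symm p) ∂(μ.prod Pn) = ∫ x, f x ∂P :=
        (hmp.symm e).integral_comp e.symm.measurableEmbedding f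
      rw [← h1]
      have h2 : ∫ p, f (e.symm p) ∂(μ.prod Pn)
          = ∫ p : α × (Fin n → α), f (Fin.cons p.1 p.2) ∂(μ.prod Pn) := by
        refine integral_congr_ae (Filter.Eventually.of_forall (fun p => ?_))
        obtain ⟨a, y⟩ := p
        show f (e.symm (a, y)) = f (Fin.cons a y)
        rw [hesymm]
      rw [h2, integral_prod_symm _ hFint]
    -- absolute bound on Ef
    have hEfM : |Ef| ≤ M := by
      rw [← hEfg]
      exact abs_integral_le_of_abs_le Pn _ M hgM
    -- main chain
    have hmain : ∫ y, Real.exp (t * (f y - Ef)) ∂P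
        = ∫ y, ∫ a, Real.exp (t * (f (Fin.cons a y) - Ef)) ∂μ ∂Pn := by
      have h1 := (hmp.symm e).integral_comp e.symm.measurableEmbedding
        (fun x => Real.exp (t * (f x - Ef)))
      rw [← h1]
      have hGm : Measurable (fun p : α × (Fin n → α) =>
          Real.exp (t * (f (Fin.cons p.1 p.2) - Ef))) :=
        (Real.measurable_exp).comp (((hFm.sub measurable_const).const_mul t))
      have hGint : Integrable (fun p : α × (Fin n → α) =>
          Real.exp (t * (f (Fin.cons p.1 p.2) - Ef))) (μ.prod Pn) := by
        refine integrable_of_abs_le _ hGm.aestronglyMeasurable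
          (Real.exp (|t| * (M + M))) (fun p => ?_)
        rw [abs_of_pos (Real.exp_pos _), Real.exp_le_exp]
        calc t * (f (Fin.cons p.1 p.2) - Ef) ≤ |t * (f (Fin.cons p.1 p.2) - Ef)| := le_abs_self _
          _ = |t| * |f (Fin.cons p.1 p.2) - Ef| := abs_mul _ _
          _ ≤ |t| * (M + M) := by
              refine mul_le_mul_of_nonneg_left ?_ (abs_nonneg t)
              calc |f (Fin.cons p.1 p.2) - Ef| ≤ |f (Fin.cons p.1 p.2)| + |Ef| := abs_sub _ _
                _ ≤ M + M := add_le_add (hM _) hEfM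
      have h2 : ∫ p, Real.exp (t * (f (e.symm p) - Ef)) ∂(μ.prod Pn)
          = ∫ p : α × (Fin n → α), Real.exp (t * (f (Fin.cons p.1 p.2) - Ef)) ∂(μ.prod Pn) := by
        refine integral_congr_ae (Filter.Eventually.of_forall (fun p => ?_))
        obtain ⟨a, y⟩ := p
        show Real.exp (t * (f (e.symm (a, y)) - Ef)) = Real.exp (t * (f (Fin.cons a y) - Ef))
        rw [hesymm]
      rw [h2, integral_prod_symm _ hGint]
    rw [hmain]
    -- pointwise Hoeffding bound for the inner integral
    have hpoint : ∀ y : Fin n → α,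
        ∫ a, Real.exp (t * (f (Fin.cons a y) - Ef)) ∂μ
          ≤ Real.exp (t * (g y - Ef)) * Real.exp (t ^ 2 * c 0 ^ 2 / 8) := by
      intro y
      set X : α → ℝ := fun a => f (Fin.cons a y) - g y with hX
      have hXsm : AEStronglyMeasurable X μ :=
        ((hconsm y).sub measurable_const).aestronglyMeasurable
      set I := sInf (Set.range fun a => f (Fin.cons a y)) with hI
      have hbdd : BddBelow (Set.range fun a => f (Fin.cons a y)) := by
        refine ⟨-M, ?_⟩
        rintro _ ⟨a, rfl⟩
        linarith [(abs_le.1 (hM (Fin.cons a y))).1]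
      have hner : (Set.range fun a => f (Fin.cons a y)).Nonempty := Set.range_nonempty _
      have hlow : ∀ a, I ≤ f (Fin.cons a y) := fun a => csInf_le hbdd ⟨a, rfl⟩
      have hosc : ∀ a a', f (Fin.cons a y) - c 0 ≤ f (Fin.cons a' y) := by
        intro a a'
        have h1 : Function.update (Fin.cons a' y) 0 a = (Fin.cons a y : Fin (n + 1) → α) := by
          exact Fin.update_cons_zero (α := fun _ => α) a' y a
        have h2 := hc 0 (Fin.cons a' y) a
        rw [h1] at h2
        linarith [(abs_le.1 h2).2]
      have hupp : ∀ a, f (Fin.cons a y) ≤ I + c 0 := by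
        intro a
        have : f (Fin.cons a y) - c 0 ≤ I := by
          refine le_csInf hner ?_
          rintro _ ⟨a', rfl⟩
          exact hosc a a'
        linarith
      have hXmem : ∀ a, X a ∈ Set.Icc (I - g y) (I + c 0 - g y) := fun a =>
        ⟨by simp only [hX]; linarith [hlow a], by simp only [hX]; linarith [hupp a]⟩
      have hXmean : ∫ a, X a ∂μ = 0 := by
        rw [hX]
        rw [integral_sub (hint y) (integrable_const _), integral_const]
        simp [hg]
      have hH := hoeffding_lemma μ X hXsm _ _ hXmem hXmean t
      have hcs : (I + c 0 - g y - (I - g y)) = c 0 := by ring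
      rw [hcs] at hH
      calc ∫ a, Real.exp (t * (f (Fin.cons a y) - Ef)) ∂μ
          = ∫ a, Real.exp (t * (g y - Ef)) * Real.exp (t * X a) ∂μ := by
            refine integral_congr_ae (Filter.Eventually.of_forall (fun a => ?_))
            show Real.exp (t * (f (Fin.cons a y) - Ef))
              = Real.exp (t * (g y - Ef)) * Real.exp (t * X a)
            rw [← Real.exp_add]
            congr 1
            simp only [hX]
            ring
        _ = Real.exp (t * (g y - Ef)) * ∫ a, Real.exp (t * X a) ∂μ := integral_const_mul _ _
        _ ≤ Real.exp (t * (g y - Ef)) * Real.exp (t ^ 2 * c 0 ^ 2 / 8) :=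
            mul_le_mul_of_nonneg_left hH (Real.exp_pos _).le
    -- integrate the pointwise bound
    have hrhs_int : Integrable
        (fun y => Real.exp (t * (g y - Ef)) * Real.exp (t ^ 2 * c 0 ^ 2 / 8)) Pn := by
      refine integrable_of_abs_le _ ((Real.measurable_exp.comp
        ((hgsm.measurable.sub measurable_const).const_mul t)).mul_const _).aestronglyMeasurable
        (Real.exp (|t| * (M + M)) * Real.exp (t ^ 2 * c 0 ^ 2 / 8)) (fun y => ?_)
      rw [abs_mul, abs_of_pos (Real.exp_pos _), abs_of_pos (Real.exp_pos _)]
      refine mul_le_mul_of_nonneg_right ?_ (Real.exp_pos _).le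
      rw [Real.exp_le_exp]
      calc t * (g y - Ef) ≤ |t * (g y - Ef)| := le_abs_self _
        _ = |t| * |g y - Ef| := abs_mul _ _
        _ ≤ |t| * (M + M) := by
            refine mul_le_mul_of_nonneg_left ?_ (abs_nonneg t)
            calc |g y - Ef| ≤ |g y| + |Ef| := abs_sub _ _
              _ ≤ M + M := add_le_add (hgM _) hEfM
    have hstep : ∫ y, ∫ a, Real.exp (t * (f (Fin.cons a y) - Ef)) ∂μ ∂Pn
        ≤ ∫ y, Real.exp (t * (g y - Ef)) * Real.exp (t ^ 2 * c 0 ^ 2 / 8) ∂Pn := by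
      refine integral_mono_of_nonneg (Filter.Eventually.of_forall (fun y => ?_)) hrhs_int
        (Filter.Eventually.of_forall hpoint)
      exact integral_nonneg (fun a => (Real.exp_pos _).le)
    refine hstep.trans ?_
    rw [integral_mul_const]
    have hih := ih g hgsm.measurable M hgM (fun j => c j.succ) hgc t
    rw [hEfg] at hih
    calc (∫ y, Real.exp (t * (g y - Ef)) ∂Pn) * Real.exp (t ^ 2 * c 0 ^ 2 / 8)
        ≤ Real.exp (t ^ 2 * (∑ j : Fin n, c j.succ ^ 2) / 8) * Real.exp (t ^ 2 * c 0 ^ 2 / 8) :=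
          mul_le_mul_of_nonneg_right hih (Real.exp_pos _).le
      _ = Real.exp (t ^ 2 * (∑ i : Fin (n + 1), c i ^ 2) / 8) := by
          rw [← Real.exp_add, Fin.sum_univ_succ]
          congr 1
          ring



/-- Chernoff bound from a square-exponential mgf bound. -/
lemma chernoff_of_mgf {Ω : Type*} [MeasurableSpace Ω] (μ : Measure Ω) [IsProbabilityMeasure μ]
    (X : Ω → ℝ) (B : ℝ) (hXm : AEStronglyMeasurable X μ) (hB : ∀ ω, |X ω| ≤ B)
    (V ε : ℝ) (hV : 0 < V) (hε : 0 ≤ ε)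
    (hmgf : ∀ t : ℝ, ∫ ω, Real.exp (t * X ω) ∂μ ≤ Real.exp (t ^ 2 * V)) :
    (μ {ω | ε ≤ X ω}).toReal ≤ Real.exp (-ε ^ 2 / (4 * V)) := by
  set t := ε / (2 * V) with htdef
  have ht : 0 ≤ t := div_nonneg hε (by linarith)
  have hint : Integrable (fun ω => Real.exp (t * X ω)) μ := by
    refine integrable_of_abs_le μ
      (Real.continuous_exp.comp_aestronglyMeasurable (hXm.const_mul t))
      (Real.exp (|t| * B)) (fun ω => ?_)
    rw [abs_of_pos (Real.exp_pos _), Real.exp_le_exp]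
    calc t * X ω ≤ |t * X ω| := le_abs_self _
      _ = |t| * |X ω| := abs_mul _ _
      _ ≤ |t| * B := mul_le_mul_of_nonneg_left (hB ω) (abs_nonneg t)
  have h := ProbabilityTheory.measure_ge_le_exp_mul_mgf (X := X) (μ := μ) ε ht hint
  have hmgfeq : ProbabilityTheory.mgf X μ t = ∫ ω, Real.exp (t * X ω) ∂μ := rfl
  refine h.trans ?_
  rw [hmgfeq]
  calc Real.exp (-t * ε) * ∫ ω, Real.exp (t * X ω) ∂μ
      ≤ Real.exp (-t * ε) * Real.exp (t ^ 2 * V) :=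
        mul_le_mul_of_nonneg_left (hmgf t) (Real.exp_pos _).le
    _ = Real.exp (t ^ 2 * V - t * ε) := by rw [← Real.exp_add]; ring_nf
    _ = Real.exp (-ε ^ 2 / (4 * V)) := by
        congr 1
        rw [htdef]
        field_simp
        ring

variable {α : Type*} [MeasurableSpace α]

lemma pi_map_eval (μ : Measure α) [IsProbabilityMeasure μ] {n : ℕ} (i : Fin n) :
    (Measure.pi fun _ : Fin n => μ).map (Function.eval i) = μ := by
  refine Measure.ext (fun s hs => ?_)
  rw [Measure.map_apply (measurable_pi_apply i) hs]
  have hpre : Function.eval i ⁻¹' s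
      = Set.pi Set.univ (fun l => if l = i then s else Set.univ) := by
    ext y
    simp only [Set.mem_preimage, Set.mem_pi, Set.mem_univ, true_implies, Function.eval]
    constructor
    · intro h l
      by_cases hli : l = i
      · subst hli; simpa using h
      · simp [hli]
    · intro h
      have := h i
      simpa using this
  rw [hpre, Measure.pi_pi]
  calc (∏ l : Fin n, μ (if l = i then s else Set.univ))
      = μ (if i = i then s else Set.univ)
        * ∏ l ∈ Finset.univ.erase i, μ (if l = i then s else Set.univ) :=
        (Finset.mul_prod_erase Finset.univ _ (Finset.mem_univ i)).symm
    _ = μ s := by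
        rw [if_pos rfl, Finset.prod_eq_one (fun l hl => by
          rw [if_neg (Finset.ne_of_mem_erase hl)]; simp), mul_one]

lemma pi_map_pair (μ : Measure α) [IsProbabilityMeasure μ] {n : ℕ} {i j : Fin n} (hij : i ≠ j) :
    (Measure.pi fun _ : Fin n => μ).map (fun y => (y i, y j)) = μ.prod μ := by
  have hm : Measurable (fun y : Fin n → α => (y i, y j)) :=
    (measurable_pi_apply i).prodMk (measurable_pi_apply j)
  refine (Measure.prod_eq (μ := μ) (ν := μ) (fun s t hs ht => ?_)).symm
  rw [Measure.map_apply hm (hs.prod ht)]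
  have hpre : (fun y : Fin n → α => (y i, y j)) ⁻¹' (s ×ˢ t)
      = Set.pi Set.univ (fun l => if l = i then s else if l = j then t else Set.univ) := by
    ext y
    simp only [Set.mem_preimage, Set.mem_prod, Set.mem_pi, Set.mem_univ, true_implies]
    constructor
    · rintro ⟨h1, h2⟩ l
      by_cases hli : l = i
      · subst hli; simpa using h1
      · by_cases hlj : l = j
        · subst hlj; simp [hli, h2]
        · simp [hli, hlj]
    · intro h
      refine ⟨?_, ?_⟩
      · have := h i; simpa using this
      · have := h j
        rw [if_neg (fun hh => hij hh.symm), if_pos rfl] at this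
        exact this
  rw [hpre, Measure.pi_pi]
  set F := fun l => μ (if l = i then s else if l = j then t else Set.univ) with hF
  have hjmem : j ∈ Finset.univ.erase i := Finset.mem_erase.2 ⟨fun hh => hij hh.symm, Finset.mem_univ j⟩
  calc (∏ l : Fin n, F l)
      = F i * ∏ l ∈ Finset.univ.erase i, F l :=
        (Finset.mul_prod_erase Finset.univ _ (Finset.mem_univ i)).symm
    _ = F i * (F j * ∏ l ∈ (Finset.univ.erase i).erase j, F l) := by
        rw [(Finset.mul_prod_erase _ _ hjmem).symm]
    _ = μ s * μ t := by
        have hFi : F i = μ s := by rw [hF]; simp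
        have hFj : F j = μ t := by
          simp only [hF]
          rw [if_neg (fun hh : j = i => hij hh.symm)]
          simp
        have hrest : ∏ l ∈ (Finset.univ.erase i).erase j, F l = 1 := by
          refine Finset.prod_eq_one (fun l hl => ?_)
          have hlj := Finset.ne_of_mem_erase hl
          have hli := Finset.ne_of_mem_erase (Finset.mem_of_mem_erase hl)
          simp only [hF]
          rw [if_neg hli, if_neg hlj]
          simp
        rw [hFi, hFj, hrest, mul_one]

lemma integral_pi_eval (μ : Measure α) [IsProbabilityMeasure μ] {n : ℕ} (i : Fin n)
    (F : α → ℝ) (hF : AEStronglyMeasurable F μ) :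
    ∫ y, F (y i) ∂(Measure.pi fun _ : Fin n => μ) = ∫ x, F x ∂μ := by
  have h1 : AEStronglyMeasurable F ((Measure.pi fun _ : Fin n => μ).map (Function.eval i)) := by
    rw [pi_map_eval μ i]; exact hF
  have h2 : ∫ x, F x ∂((Measure.pi fun _ : Fin n => μ).map (Function.eval i))
      = ∫ y, F (y i) ∂(Measure.pi fun _ : Fin n => μ) :=
    integral_map (measurable_pi_apply i).aemeasurable h1
  rw [← h2, pi_map_eval μ i]

lemma integral_pi_pair (μ : Measure α) [IsProbabilityMeasure μ] {n : ℕ} {i j : Fin n}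
    (hij : i ≠ j) (F : α → α → ℝ) (hFm : Measurable (Function.uncurry F)) (C : ℝ)
    (hFb : ∀ x y, |F x y| ≤ C) :
    ∫ y, F (y i) (y j) ∂(Measure.pi fun _ : Fin n => μ) = ∫ x, ∫ z, F x z ∂μ ∂μ := by
  have hm : Measurable (fun y : Fin n → α => (y i, y j)) :=
    (measurable_pi_apply i).prodMk (measurable_pi_apply j)
  have h1 : AEStronglyMeasurable (fun p : α × α => F p.1 p.2)
      ((Measure.pi fun _ : Fin n => μ).map (fun y => (y i, y j))) :=
    hFm.aestronglyMeasurable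
  have h2 : ∫ y, F (y i) (y j) ∂(Measure.pi fun _ : Fin n => μ)
      = ∫ p : α × α, F p.1 p.2 ∂((Measure.pi fun _ : Fin n => μ).map (fun y => (y i, y j))) := by
    rw [integral_map hm.aemeasurable h1]
  rw [h2, pi_map_pair μ hij]
  have hint : Integrable (fun p : α × α => F p.1 p.2) (μ.prod μ) :=
    integrable_of_abs_le _ hFm.aestronglyMeasurable C (fun p => hFb p.1 p.2)
  rw [integral_prod _ hint]

end KernelScoreAux

open Real in
/-- Concentration of the kernel score empirical loss via McDiarmid's inequality
(Lemma in Appendix A.2 of the paper).  For a kernel `k` with `|k(x,y)| ≤ κ`, the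
empirical loss `L` defining the Kernel Score posterior concentrates around the
divergence `Dk` (squared MMD) between `Pθ` and `P0`: for `Y₁,…,Y_n` i.i.d. with
law `P0` and any `δ ∈ (0,1]`, with probability at least `1 - δ`,
`|L(θ, Y) - Dk| ≤ √(-(32 κ²/n) log(δ/2))`. -/
theorem kernel_score_empirical_loss_concentration
    {d : ℕ}
    (Pθ P0 : Measure (EuclideanSpace ℝ (Fin d)))
    [IsProbabilityMeasure Pθ] [IsProbabilityMeasure P0]
    (k : EuclideanSpace ℝ (Fin d) → EuclideanSpace ℝ (Fin d) → ℝ)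
    (hk_meas : Measurable (Function.uncurry k))
    (hk_symm : ∀ x y, k x y = k y x)
    (κ : ℝ) (hκ : 0 ≤ κ)
    (hk_bdd : ∀ x y, |k x y| ≤ κ)
    (n : ℕ) (hn : 2 ≤ n)
    (L : (Fin n → EuclideanSpace ℝ (Fin d)) → ℝ)
    (hL : ∀ ys, L ys =
      (∫ x, ∫ x', k x x' ∂Pθ ∂Pθ)
        - (2 / (n : ℝ)) * ∑ i, (∫ x, k x (ys i) ∂Pθ)
        + ((n : ℝ) * ((n : ℝ) - 1))⁻¹ *
            ∑ i, ∑ j ∈ Finset.univ.erase i, k (ys i) (ys j))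
    (Dk : ℝ)
    (hDk : Dk =
      (∫ x, ∫ x', k x x' ∂Pθ ∂Pθ) + (∫ y, ∫ y', k y y' ∂P0 ∂P0)
        - 2 * ∫ x, ∫ y, k x y ∂P0 ∂Pθ)
    (δ : ℝ) (hδ : δ ∈ Set.Ioc (0 : ℝ) 1) :
    ENNReal.ofReal (1 - δ) ≤
      (Measure.pi fun _ : Fin n => P0)
        {ys : Fin n → EuclideanSpace ℝ (Fin d) |
          |L ys - Dk| ≤ Real.sqrt (-(32 * κ ^ 2 / (n : ℝ)) * Real.log (δ / 2))} := by
  obtain ⟨hδ0, hδ1⟩ := hδ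
  by_cases hκ0 : κ = 0
  · subst hκ0
    have hk0 : ∀ x y, k x y = 0 := fun x y =>
      abs_eq_zero.1 (le_antisymm (hk_bdd x y) (abs_nonneg _))
    have hL0 : ∀ ys, L ys = 0 := by intro ys; rw [hL ys]; simp [hk0]
    have hDk0 : Dk = 0 := by rw [hDk]; simp [hk0]
    have hset : {ys : Fin n → EuclideanSpace ℝ (Fin d) |
        |L ys - Dk| ≤ Real.sqrt (-(32 * (0:ℝ) ^ 2 / (n : ℝ)) * Real.log (δ / 2))}
        = Set.univ := by
      ext ys
      simp [hL0, hDk0, Real.sqrt_nonneg]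
    rw [hset]
    simp only [measure_univ]
    exact ENNReal.ofReal_le_one.2 (by linarith)
  · have hκpos : 0 < κ := lt_of_le_of_ne hκ (Ne.symm hκ0)
    have hn2 : (2:ℝ) ≤ (n:ℝ) := by exact_mod_cast hn
    have hn0 : (0:ℝ) < (n:ℝ) := by linarith
    have hn1 : (1:ℝ) ≤ (n:ℝ) - 1 := by linarith
    have hnne : (n:ℝ) ≠ 0 := hn0.ne'
    have hn1' : 1 ≤ n := le_trans (by norm_num) hn
    set μpi : Measure (Fin n → EuclideanSpace ℝ (Fin d)) := Measure.pi fun _ : Fin n => P0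
      with hμpi
    set ε := Real.sqrt (-(32 * κ ^ 2 / (n : ℝ)) * Real.log (δ / 2)) with hεdef
    have hε0 : 0 ≤ ε := Real.sqrt_nonneg _
    have hlogneg : Real.log (δ / 2) < 0 := Real.log_neg (by linarith) (by linarith)
    have hεsq_nonneg : 0 ≤ -(32 * κ ^ 2 / (n : ℝ)) * Real.log (δ / 2) := by
      have h1 : 0 < 32 * κ ^ 2 / (n : ℝ) := by positivity
      nlinarith
    have hε2 : ε ^ 2 = -(32 * κ ^ 2 / (n : ℝ)) * Real.log (δ / 2) :=
      Real.sq_sqrt hεsq_nonneg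
    -- basic measurability and bounds
    have hFm : StronglyMeasurable (fun y0 : EuclideanSpace ℝ (Fin d) => ∫ x, k x y0 ∂Pθ) :=
      hk_meas.stronglyMeasurable.integral_prod_left'
    set F : EuclideanSpace ℝ (Fin d) → ℝ := fun y0 => ∫ x, k x y0 ∂Pθ with hFdef
    have hFb : ∀ y0, |F y0| ≤ κ := fun y0 =>
      abs_integral_le_of_abs_le Pθ _ κ (fun x => hk_bdd x y0)
    set A := ∫ x, ∫ x', k x x' ∂Pθ ∂Pθ with hA
    set c2 : ℝ := ((n : ℝ) * ((n : ℝ) - 1))⁻¹ with hc2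
    have hc2pos : 0 < (n:ℝ) * ((n:ℝ) - 1) := by nlinarith
    have hc2nonneg : 0 ≤ c2 := by rw [hc2]; positivity
    have hLfun : L = fun ys => A - (2 / (n : ℝ)) * ∑ i, F (ys i)
        + c2 * ∑ i, ∑ j ∈ Finset.univ.erase i, k (ys i) (ys j) := funext hL
    have hLm : Measurable L := by
      rw [hLfun]
      apply Measurable.add
      · apply Measurable.sub measurable_const
        apply Measurable.const_mul
        exact Finset.measurable_sum _ (fun i _ => hFm.measurable.comp (measurable_pi_apply i))
      · apply Measurable.const_mul
        refine Finset.measurable_sum _ (fun i _ => Finset.measurable_sum _ (fun j _ => ?_))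
        have h1 : Measurable (fun ys : Fin n → EuclideanSpace ℝ (Fin d) => (ys i, ys j)) :=
          (measurable_pi_apply i).prodMk (measurable_pi_apply j)
        exact hk_meas.comp h1
    have hAb : |A| ≤ κ := abs_integral_le_of_abs_le Pθ _ κ (fun x =>
      abs_integral_le_of_abs_le Pθ _ κ (fun x' => hk_bdd x x'))
    have hcard_erase : ∀ i : Fin n, (Finset.univ.erase i).card = n - 1 := fun i => by
      rw [Finset.card_erase_of_mem (Finset.mem_univ i), Finset.card_univ, Fintype.card_fin]
    have hcastn1 : ((n - 1 : ℕ) : ℝ) = (n:ℝ) - 1 := by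
      push_cast [Nat.cast_sub hn1']
      ring
    have hsum1 : ∀ ys : Fin n → EuclideanSpace ℝ (Fin d), |∑ i, F (ys i)| ≤ (n:ℝ) * κ := by
      intro ys
      calc |∑ i, F (ys i)| ≤ ∑ i, |F (ys i)| := Finset.abs_sum_le_sum_abs _ _
        _ ≤ ∑ _i : Fin n, κ := Finset.sum_le_sum (fun i _ => hFb (ys i))
        _ = (n:ℝ) * κ := by
            rw [Finset.sum_const, Finset.card_univ, Fintype.card_fin, nsmul_eq_mul]
    have hsum2 : ∀ ys : Fin n → EuclideanSpace ℝ (Fin d),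
        |∑ i, ∑ j ∈ Finset.univ.erase i, k (ys i) (ys j)| ≤ (n:ℝ) * ((n:ℝ) - 1) * κ := by
      intro ys
      calc |∑ i, ∑ j ∈ Finset.univ.erase i, k (ys i) (ys j)|
          ≤ ∑ i, |∑ j ∈ Finset.univ.erase i, k (ys i) (ys j)| := Finset.abs_sum_le_sum_abs _ _
        _ ≤ ∑ _i : Fin n, ((n:ℝ) - 1) * κ := by
            refine Finset.sum_le_sum (fun i _ => ?_)
            calc |∑ j ∈ Finset.univ.erase i, k (ys i) (ys j)|
                ≤ ∑ j ∈ Finset.univ.erase i, |k (ys i) (ys j)| := Finset.abs_sum_le_sum_abs _ _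
              _ ≤ ∑ _j ∈ Finset.univ.erase i, κ :=
                  Finset.sum_le_sum (fun j _ => hk_bdd _ _)
              _ = ((n:ℝ) - 1) * κ := by
                  rw [Finset.sum_const, hcard_erase i, nsmul_eq_mul, hcastn1]
        _ = (n:ℝ) * ((n:ℝ) - 1) * κ := by
            rw [Finset.sum_const, Finset.card_univ, Fintype.card_fin, nsmul_eq_mul]
            ring
    have hLb : ∀ ys, |L ys| ≤ 4 * κ := by
      intro ys
      rw [hL ys]
      have h2n : (0:ℝ) ≤ 2 / (n:ℝ) := by positivity
      have hstep1 : |A - 2 / (n:ℝ) * ∑ i, F (ys i)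
          + c2 * ∑ i, ∑ j ∈ Finset.univ.erase i, k (ys i) (ys j)|
          ≤ |A| + |2 / (n:ℝ) * ∑ i, F (ys i)|
            + |c2 * ∑ i, ∑ j ∈ Finset.univ.erase i, k (ys i) (ys j)| := by
        refine (abs_add_le _ _).trans ?_
        have := abs_sub A (2 / (n:ℝ) * ∑ i, F (ys i))
        linarith
      refine hstep1.trans ?_
      have h1 : |2 / (n:ℝ) * ∑ i, F (ys i)| ≤ 2 * κ := by
        rw [abs_mul, abs_of_nonneg h2n]
        calc 2 / (n:ℝ) * |∑ i, F (ys i)| ≤ 2 / (n:ℝ) * ((n:ℝ) * κ) :=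
            mul_le_mul_of_nonneg_left (hsum1 ys) h2n
          _ = 2 * κ := by field_simp
      have h2 : |c2 * ∑ i, ∑ j ∈ Finset.univ.erase i, k (ys i) (ys j)| ≤ κ := by
        rw [abs_mul, abs_of_nonneg hc2nonneg]
        calc c2 * |∑ i, ∑ j ∈ Finset.univ.erase i, k (ys i) (ys j)|
            ≤ c2 * ((n:ℝ) * ((n:ℝ) - 1) * κ) :=
              mul_le_mul_of_nonneg_left (hsum2 ys) hc2nonneg
          _ = κ := by
              rw [hc2]
              field_simp
      linarith
    -- bounded differences
    have hLc : ∀ (i : Fin n) (ys : Fin n → EuclideanSpace ℝ (Fin d))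
        (z : EuclideanSpace ℝ (Fin d)),
        |L (Function.update ys i z) - L ys| ≤ 8 * κ / (n:ℝ) := by
      intro i ys z
      set u := Function.update ys i z with hu
      have hui : ∀ l : Fin n, l ≠ i → u l = ys l := fun l hl => Function.update_of_ne hl _ _
      rw [hL u, hL ys]
      set dd : Fin n → Fin n → ℝ := fun l m => k (u l) (u m) - k (ys l) (ys m) with hdd
      have hd0 : ∀ l m, l ≠ i → m ≠ i → dd l m = 0 := by
        intro l m hl hm
        rw [hdd]
        simp only [hui l hl, hui m hm, sub_self]
      have hdb : ∀ l m, |dd l m| ≤ 2 * κ := by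
        intro l m
        rw [hdd]
        calc |k (u l) (u m) - k (ys l) (ys m)| ≤ |k (u l) (u m)| + |k (ys l) (ys m)| :=
            abs_sub _ _
          _ ≤ κ + κ := add_le_add (hk_bdd _ _) (hk_bdd _ _)
          _ = 2 * κ := by ring
      have hD1 : (∑ l, F (u l)) - (∑ l, F (ys l)) = F (u i) - F (ys i) := by
        rw [← Finset.sum_sub_distrib]
        refine Finset.sum_eq_single i (fun l _ hl => by rw [hui l hl]; ring)
          (fun h => absurd (Finset.mem_univ i) h)
      have hD1b : |(∑ l, F (u l)) - (∑ l, F (ys l))| ≤ 2 * κ := by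
        rw [hD1]
        calc |F (u i) - F (ys i)| ≤ |F (u i)| + |F (ys i)| := abs_sub _ _
          _ ≤ κ + κ := add_le_add (hFb _) (hFb _)
          _ = 2 * κ := by ring
      have hD2 : |(∑ l, ∑ m ∈ Finset.univ.erase l, k (u l) (u m))
          - ∑ l, ∑ m ∈ Finset.univ.erase l, k (ys l) (ys m)|
          ≤ 4 * ((n:ℝ) - 1) * κ := by
        have hrw : (∑ l, ∑ m ∈ Finset.univ.erase l, k (u l) (u m))
            - (∑ l, ∑ m ∈ Finset.univ.erase l, k (ys l) (ys m))
            = ∑ l, ∑ m ∈ Finset.univ.erase l, dd l m := by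
          rw [← Finset.sum_sub_distrib]
          refine Finset.sum_congr rfl (fun l _ => ?_)
          rw [← Finset.sum_sub_distrib]
        rw [hrw]
        calc |∑ l, ∑ m ∈ Finset.univ.erase l, dd l m|
            ≤ ∑ l, |∑ m ∈ Finset.univ.erase l, dd l m| := Finset.abs_sum_le_sum_abs _ _
          _ ≤ ∑ l, ∑ m ∈ Finset.univ.erase l, |dd l m| :=
              Finset.sum_le_sum (fun l _ => Finset.abs_sum_le_sum_abs _ _)
          _ = (∑ m ∈ Finset.univ.erase i, |dd i m|)
              + ∑ l ∈ Finset.univ.erase i, ∑ m ∈ Finset.univ.erase l, |dd l m| :=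
              (Finset.add_sum_erase _ _ (Finset.mem_univ i)).symm
          _ ≤ ((n:ℝ) - 1) * (2 * κ) + ((n:ℝ) - 1) * (2 * κ) := by
              refine add_le_add ?_ ?_
              · calc ∑ m ∈ Finset.univ.erase i, |dd i m|
                    ≤ ∑ _m ∈ Finset.univ.erase i, 2 * κ :=
                      Finset.sum_le_sum (fun m _ => hdb i m)
                  _ = ((n:ℝ) - 1) * (2 * κ) := by
                      rw [Finset.sum_const, hcard_erase i, nsmul_eq_mul, hcastn1]
              · calc ∑ l ∈ Finset.univ.erase i, ∑ m ∈ Finset.univ.erase l, |dd l m|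
                    ≤ ∑ _l ∈ Finset.univ.erase i, 2 * κ := by
                      refine Finset.sum_le_sum (fun l hl => ?_)
                      have hli : l ≠ i := Finset.ne_of_mem_erase hl
                      have himem : i ∈ Finset.univ.erase l :=
                        Finset.mem_erase.2 ⟨fun h => hli h.symm, Finset.mem_univ i⟩
                      rw [Finset.sum_eq_single_of_mem i himem (fun m _ hmi => by
                        rw [abs_eq_zero]; exact hd0 l m hli hmi)]
                      exact hdb l i
                  _ = ((n:ℝ) - 1) * (2 * κ) := by
                      rw [Finset.sum_const, hcard_erase i, nsmul_eq_mul, hcastn1]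
          _ = 4 * ((n:ℝ) - 1) * κ := by ring
      have hkey : A - 2 / (n:ℝ) * ∑ l, F (u l)
          + c2 * ∑ l, ∑ m ∈ Finset.univ.erase l, k (u l) (u m)
          - (A - 2 / (n:ℝ) * ∑ l, F (ys l)
            + c2 * ∑ l, ∑ m ∈ Finset.univ.erase l, k (ys l) (ys m))
          = -(2 / (n:ℝ) * ((∑ l, F (u l)) - ∑ l, F (ys l)))
            + c2 * ((∑ l, ∑ m ∈ Finset.univ.erase l, k (u l) (u m))
              - ∑ l, ∑ m ∈ Finset.univ.erase l, k (ys l) (ys m)) := by ring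
      rw [hkey]
      have h2n : (0:ℝ) ≤ 2 / (n:ℝ) := by positivity
      calc |-(2 / (n:ℝ) * ((∑ l, F (u l)) - ∑ l, F (ys l)))
            + c2 * ((∑ l, ∑ m ∈ Finset.univ.erase l, k (u l) (u m))
              - ∑ l, ∑ m ∈ Finset.univ.erase l, k (ys l) (ys m))|
          ≤ |2 / (n:ℝ) * ((∑ l, F (u l)) - ∑ l, F (ys l))|
            + |c2 * ((∑ l, ∑ m ∈ Finset.univ.erase l, k (u l) (u m))
              - ∑ l, ∑ m ∈ Finset.univ.erase l, k (ys l) (ys m))| := by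
            refine (abs_add_le _ _).trans ?_
            rw [abs_neg]
        _ ≤ 2 / (n:ℝ) * (2 * κ) + c2 * (4 * ((n:ℝ) - 1) * κ) := by
            rw [abs_mul, abs_mul, abs_of_nonneg h2n, abs_of_nonneg hc2nonneg]
            exact add_le_add (mul_le_mul_of_nonneg_left hD1b h2n)
              (mul_le_mul_of_nonneg_left hD2 hc2nonneg)
        _ = 8 * κ / (n:ℝ) := by
            rw [hc2]
            have hne1 : (n:ℝ) - 1 ≠ 0 := by linarith
            field_simp
            ring
    -- expectation of L equals Dk
    set B := ∫ y, ∫ y', k y y' ∂P0 ∂P0 with hB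
    set CT := ∫ x, ∫ y, k x y ∂P0 ∂Pθ with hCT
    have hswap : ∫ y0, F y0 ∂P0 = CT := by
      rw [hCT]
      exact integral_integral_swap (f := fun y x => k x y) (μ := P0) (ν := Pθ)
        (integrable_of_abs_le _ ((hk_meas.comp measurable_swap).aestronglyMeasurable) κ
          (fun p => hk_bdd p.2 p.1))
    have hint1 : ∀ i : Fin n, Integrable (fun ys : Fin n → EuclideanSpace ℝ (Fin d) =>
        F (ys i)) μpi := fun i =>
      integrable_of_abs_le _ ((hFm.measurable.comp (measurable_pi_apply i)).aestronglyMeasurable)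
        κ (fun ys => hFb _)
    have hint2 : ∀ i j : Fin n, Integrable (fun ys : Fin n → EuclideanSpace ℝ (Fin d) =>
        k (ys i) (ys j)) μpi := by
      intro i j
      have h1 : Measurable (fun ys : Fin n → EuclideanSpace ℝ (Fin d) => (ys i, ys j)) :=
        (measurable_pi_apply i).prodMk (measurable_pi_apply j)
      have hm : Measurable (fun ys : Fin n → EuclideanSpace ℝ (Fin d) => k (ys i) (ys j)) :=
        hk_meas.comp h1
      exact integrable_of_abs_le _ hm.aestronglyMeasurable κ (fun ys => hk_bdd _ _)
    have hEL : ∫ ys, L ys ∂μpi = Dk := by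
      rw [hLfun]
      have hT2int : Integrable (fun ys : Fin n → EuclideanSpace ℝ (Fin d) =>
          (2/(n:ℝ)) * ∑ i, F (ys i)) μpi :=
        (integrable_finset_sum Finset.univ (fun i _ => hint1 i)).const_mul _
      have hT3int : Integrable (fun ys : Fin n → EuclideanSpace ℝ (Fin d) =>
          c2 * ∑ i, ∑ j ∈ Finset.univ.erase i, k (ys i) (ys j)) μpi :=
        (integrable_finset_sum Finset.univ (fun i _ =>
          integrable_finset_sum _ (fun j _ => hint2 i j))).const_mul _
      have hsubint : Integrable (fun ys : Fin n → EuclideanSpace ℝ (Fin d) =>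
          A - (2/(n:ℝ)) * ∑ i, F (ys i)) μpi := by
        exact (integrable_const A).sub hT2int
      rw [integral_add hsubint hT3int,
        integral_sub (integrable_const A) hT2int, integral_const]
      simp only [probReal_univ, measure_univ, ENNReal.toReal_one, one_smul]
      rw [integral_const_mul, integral_const_mul,
        integral_finset_sum Finset.univ (fun i _ => hint1 i),
        integral_finset_sum Finset.univ (fun i _ =>
          integrable_finset_sum _ (fun j _ => hint2 i j))]
      have h1 : ∑ i : Fin n, ∫ ys, F (ys i) ∂μpi = (n:ℝ) * CT := by
        rw [Finset.sum_congr rfl (fun i _ =>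
          (integral_pi_eval P0 i F hFm.aestronglyMeasurable).trans hswap)]
        rw [Finset.sum_const, Finset.card_univ, Fintype.card_fin, nsmul_eq_mul]
      have h2 : ∑ i : Fin n, ∫ ys, (∑ j ∈ Finset.univ.erase i, k (ys i) (ys j)) ∂μpi
          = (n:ℝ) * ((n:ℝ) - 1) * B := by
        have hinner : ∀ i : Fin n,
            ∫ ys, (∑ j ∈ Finset.univ.erase i, k (ys i) (ys j)) ∂μpi = ((n:ℝ) - 1) * B := by
          intro i
          rw [integral_finset_sum _ (fun j _ => hint2 i j)]
          rw [Finset.sum_congr rfl (fun j hj =>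
            integral_pi_pair P0 (Ne.symm (Finset.ne_of_mem_erase hj)) k hk_meas κ hk_bdd)]
          rw [Finset.sum_const, hcard_erase i, nsmul_eq_mul, hcastn1]
        rw [Finset.sum_congr rfl (fun i _ => hinner i),
          Finset.sum_const, Finset.card_univ, Fintype.card_fin, nsmul_eq_mul]
        ring
      rw [h1, h2, hDk]
      have e1 : (2/(n:ℝ)) * ((n:ℝ) * CT) = 2 * CT := by field_simp
      have e2 : c2 * ((n:ℝ) * ((n:ℝ) - 1) * B) = B := by
        rw [hc2]
        field_simp
      rw [e1, e2]
      rw [hA, hB, hCT]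
      ring
    -- MGF bound (McDiarmid)
    set V : ℝ := 8 * κ ^ 2 / (n:ℝ) with hV
    have hVpos : 0 < V := by rw [hV]; positivity
    have hmgf : ∀ t : ℝ, ∫ ys, Real.exp (t * (L ys - Dk)) ∂μpi ≤ Real.exp (t ^ 2 * V) := by
      intro t
      have h := mcdiarmid_mgf P0 n L hLm (4*κ) hLb (fun _ => 8 * κ / (n:ℝ)) hLc t
      rw [← hμpi, hEL] at h
      refine h.trans (le_of_eq ?_)
      congr 1
      rw [Finset.sum_const, Finset.card_univ, Fintype.card_fin, nsmul_eq_mul, hV]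
      field_simp
    have hmgf' : ∀ t : ℝ, ∫ ys, Real.exp (t * (Dk - L ys)) ∂μpi ≤ Real.exp (t ^ 2 * V) := by
      intro t
      have h := hmgf (-t)
      have heq : ∀ ys, Real.exp ((-t) * (L ys - Dk)) = Real.exp (t * (Dk - L ys)) :=
        fun ys => by congr 1; ring
      rw [integral_congr_ae (Filter.Eventually.of_forall heq), neg_sq] at h
      exact h
    -- tail bounds
    have hXb : ∀ ys, |L ys - Dk| ≤ 4 * κ + |Dk| := fun ys =>
      (abs_sub _ _).trans (add_le_add (hLb ys) le_rfl)
    have hXb' : ∀ ys, |Dk - L ys| ≤ 4 * κ + |Dk| := fun ys => by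
      rw [abs_sub_comm]; exact hXb ys
    have hT1 := chernoff_of_mgf μpi (fun ys => L ys - Dk) (4 * κ + |Dk|)
      ((hLm.sub measurable_const).aestronglyMeasurable) hXb V ε hVpos hε0 hmgf
    have hT2 := chernoff_of_mgf μpi (fun ys => Dk - L ys) (4 * κ + |Dk|)
      ((measurable_const.sub hLm).aestronglyMeasurable) hXb' V ε hVpos hε0 hmgf'
    have hexp : Real.exp (-ε ^ 2 / (4 * V)) = δ / 2 := by
      have harg : -ε ^ 2 / (4 * V) = Real.log (δ / 2) := by
        rw [hε2, hV]
        field_simp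
        ring
      rw [harg, Real.exp_log (by linarith)]
    rw [hexp] at hT1 hT2
    have hT1' : μpi {ys | ε ≤ L ys - Dk} ≤ ENNReal.ofReal (δ/2) := by
      rw [← ENNReal.ofReal_toReal (measure_ne_top μpi _)]
      exact ENNReal.ofReal_le_ofReal hT1
    have hT2' : μpi {ys | ε ≤ Dk - L ys} ≤ ENNReal.ofReal (δ/2) := by
      rw [← ENNReal.ofReal_toReal (measure_ne_top μpi _)]
      exact ENNReal.ofReal_le_ofReal hT2
    -- event and complement
    set S : Set (Fin n → EuclideanSpace ℝ (Fin d)) := {ys | |L ys - Dk| ≤ ε} with hS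
    have hSm : MeasurableSet S := measurableSet_le (hLm.sub measurable_const).abs
      measurable_const
    have hsub : Sᶜ ⊆ {ys | ε ≤ L ys - Dk} ∪ {ys | ε ≤ Dk - L ys} := by
      intro ys hys
      simp only [hS, Set.mem_compl_iff, Set.mem_setOf_eq, not_le] at hys
      rcases abs_cases (L ys - Dk) with ⟨heq, _⟩ | ⟨heq, _⟩
      · left
        exact Set.mem_setOf.2 (by rw [← heq]; exact hys.le)
      · right
        refine Set.mem_setOf.2 ?_
        have : |L ys - Dk| = Dk - L ys := by rw [heq]; ring
        rw [← this]
        exact hys.le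
    have hcompl : μpi Sᶜ ≤ ENNReal.ofReal δ := by
      calc μpi Sᶜ ≤ μpi ({ys | ε ≤ L ys - Dk} ∪ {ys | ε ≤ Dk - L ys}) := measure_mono hsub
        _ ≤ μpi {ys | ε ≤ L ys - Dk} + μpi {ys | ε ≤ Dk - L ys} := measure_union_le _ _
        _ ≤ ENNReal.ofReal (δ/2) + ENNReal.ofReal (δ/2) := add_le_add hT1' hT2'
        _ = ENNReal.ofReal δ := by
            rw [← ENNReal.ofReal_add (by linarith) (by linarith)]
            norm_num
    have h1 : ENNReal.ofReal (1 - δ) = 1 - ENNReal.ofReal δ := by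
      rw [← ENNReal.ofReal_one, ← ENNReal.ofReal_sub _ hδ0.le]
    rw [h1]
    calc (1 : ENNReal) - ENNReal.ofReal δ ≤ 1 - μpi Sᶜ := tsub_le_tsub_left hcompl 1
      _ ≤ μpi S := by
        rw [tsub_le_iff_right]
        have h2 := measure_add_measure_compl (μ := μpi) hSm
        rw [measure_univ] at h2
        exact le_of_eq h2.symm
end

section
/- Propriety (but not strict propriety) of the Gaussian copula score at the matrix level: Let R_Q be a d×d symmetric positive-definite matrix and let U be a random vector in ℝ^d with mean vector 0 and covariance matrix R_Q. Then for any d×d symmetric positive-definite matrix R_C, E[ (1/2) log det R_C + (1/2) Uᵀ (R_C^{-1} − I_d) U ] = (1/2)( log(det R_C / det R_Q) − d + Tr(R_C^{-1} R_Q) ) + (1/2) log det R_Q + d/2 − (1/2) Tr(R_Q), where the first summand is nonnegative and equals 0 if and only if R_C = R_Q; hence the expectation is minimized over symmetric positive-definite R_C exactly when R_C = R_Q. -/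
/-!
Write `S = √RQ` and `M = S RC⁻¹ S`. Then `M` is positive definite with `tr M = tr (RC⁻¹ RQ)` and
`det M = det RQ / det RC`, so twice the Kullback–Leibler term equals `tr M - log det M - d`, which is
`∑ (λ - log λ - 1)` over the eigenvalues `λ` of `M`. Each summand is nonnegative and vanishes only at
`λ = 1`, so the term vanishes exactly when `M = 1`, i.e. `RC = RQ`. The decomposition of the
expected score follows from `E[Uᵀ A U] = tr (A RQ)`.
-/

open MeasureTheory Matrix

lemma Real.sub_log_sub_one_nonneg {x : ℝ} (hx : 0 < x) : 0 ≤ x - Real.log x - 1 := by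
  linarith [Real.log_le_sub_one_of_pos hx]

lemma Real.sub_log_sub_one_eq_zero_iff {x : ℝ} (hx : 0 < x) : x - Real.log x - 1 = 0 ↔ x = 1 := by
  refine ⟨fun h => ?_, by rintro rfl; simp⟩
  by_contra hx1
  linarith [Real.log_lt_sub_one_of_pos hx hx1]

namespace Matrix

variable {n : Type*} [Fintype n]

lemma dotProduct_mulVec_self_eq_sum {α : Type*} [CommSemiring α] (u : n → α) (A : Matrix n n α) :
    u ⬝ᵥ (A *ᵥ u) = ∑ i, ∑ j, A i j * (u i * u j) := by
  simp only [dotProduct, mulVec, Finset.mul_sum]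
  exact Finset.sum_congr rfl fun i _ => Finset.sum_congr rfl fun j _ => by ring

variable [DecidableEq n]

lemma IsHermitian.eq_one_of_eigenvalues_eq_one {M : Matrix n n ℝ} (hM : M.IsHermitian)
    (h : ∀ i, hM.eigenvalues i = 1) : M = 1 := by
  refine CFC.eq_one_of_spectrum_subset_one (R := ℝ) M ?_ hM.isSelfAdjoint
  rw [hM.spectrum_real_eq_range_eigenvalues]
  rintro - ⟨i, rfl⟩
  exact h i

lemma PosDef.trace_sub_log_det_sub_card_eq_sum {M : Matrix n n ℝ} (hM : M.PosDef) :
    M.trace - Real.log M.det - Fintype.card n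
      = ∑ i, (hM.1.eigenvalues i - Real.log (hM.1.eigenvalues i) - 1) := by
  simp only [hM.1.trace_eq_sum_eigenvalues, hM.1.det_eq_prod_eigenvalues,
    RCLike.ofReal_real_eq_id, id]
  rw [Real.log_prod fun i _ => (hM.eigenvalues_pos i).ne']
  simp [Finset.sum_sub_distrib]

lemma PosDef.trace_sub_log_det_sub_card_nonneg {M : Matrix n n ℝ} (hM : M.PosDef) :
    0 ≤ M.trace - Real.log M.det - Fintype.card n := by
  rw [hM.trace_sub_log_det_sub_card_eq_sum]
  exact Finset.sum_nonneg fun i _ => Real.sub_log_sub_one_nonneg (hM.eigenvalues_pos i)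

lemma PosDef.trace_sub_log_det_sub_card_eq_zero_iff {M : Matrix n n ℝ} (hM : M.PosDef) :
    M.trace - Real.log M.det - Fintype.card n = 0 ↔ M = 1 := by
  refine ⟨fun h => hM.1.eq_one_of_eigenvalues_eq_one fun i => ?_, by rintro rfl; simp⟩
  rw [hM.trace_sub_log_det_sub_card_eq_sum, Finset.sum_eq_zero_iff_of_nonneg fun i _ =>
    Real.sub_log_sub_one_nonneg (hM.eigenvalues_pos i)] at h
  exact (Real.sub_log_sub_one_eq_zero_iff (hM.eigenvalues_pos i)).1 (h i (Finset.mem_univ i))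

lemma mul_mul_self_eq_one_iff {α : Type*} [CommRing α] {S X : Matrix n n α} (hS : IsUnit S) :
    S * X * S = 1 ↔ X = (S * S)⁻¹ := by
  have hdet : IsUnit S.det := (isUnit_iff_isUnit_det S).1 hS
  rw [mul_inv_rev]
  constructor
  · intro h
    calc X = S⁻¹ * (S * X * S) * S⁻¹ := by
          simp only [Matrix.mul_assoc, mul_nonsing_inv S hdet, Matrix.mul_one,
            ← Matrix.mul_assoc S⁻¹, nonsing_inv_mul S hdet, Matrix.one_mul]
      _ = S⁻¹ * S⁻¹ := by rw [h, Matrix.mul_one]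
  · rintro rfl
    simp only [Matrix.mul_assoc, nonsing_inv_mul S hdet, Matrix.mul_one, mul_nonsing_inv S hdet]

/-- `KL(N(0, RQ) ‖ N(0, RC))`. -/
noncomputable def centeredGaussianKL (RQ RC : Matrix n n ℝ) : ℝ :=
  (1 / 2) * (Real.log (RC.det / RQ.det) - Fintype.card n + (RC⁻¹ * RQ).trace)

lemma centeredGaussianKL_eq_of_mul_self_eq {RQ RC S : Matrix n n ℝ} (hS : S * S = RQ) :
    centeredGaussianKL RQ RC = (1 / 2) *
      ((S * RC⁻¹ * S).trace - Real.log (S * RC⁻¹ * S).det - Fintype.card n) := by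
  have htrace : (S * RC⁻¹ * S).trace = (RC⁻¹ * RQ).trace := by
    rw [Matrix.mul_assoc, trace_mul_comm, Matrix.mul_assoc, hS]
  have hdet : (S * RC⁻¹ * S).det = (RC.det / RQ.det)⁻¹ := by
    rw [← hS, det_mul, det_mul, det_mul, det_nonsing_inv, Ring.inverse_eq_inv', div_eq_mul_inv,
      mul_inv, inv_inv]
    ring
  rw [centeredGaussianKL, htrace, hdet, Real.log_inv]
  ring

section

open scoped MatrixOrder

lemma PosDef.isUnit_sqrt {A : Matrix n n ℝ} (hA : A.PosDef) : IsUnit (CFC.sqrt A) := by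
  have hS : CFC.sqrt A * CFC.sqrt A = A := CFC.sqrt_mul_sqrt_self A hA.posSemidef.nonneg
  exact isUnit_of_mul_isUnit_left (hS ▸ hA.isUnit)

lemma PosDef.sqrt_mul_inv_mul_sqrt {RQ RC : Matrix n n ℝ} (hRQ : RQ.PosDef) (hRC : RC.PosDef) :
    (CFC.sqrt RQ * RC⁻¹ * CFC.sqrt RQ).PosDef := by
  have hSH : (CFC.sqrt RQ)ᴴ = CFC.sqrt RQ := (CFC.sqrt_nonneg RQ).posSemidef.1
  simpa only [hSH] using
    hRC.inv.conjTranspose_mul_mul_same (mulVec_injective_iff_isUnit.2 hRQ.isUnit_sqrt)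

variable {RQ RC : Matrix n n ℝ} (hRQ : RQ.PosDef) (hRC : RC.PosDef)
include hRQ hRC

lemma centeredGaussianKL_nonneg : 0 ≤ centeredGaussianKL RQ RC := by
  rw [centeredGaussianKL_eq_of_mul_self_eq (CFC.sqrt_mul_sqrt_self RQ hRQ.posSemidef.nonneg)]
  exact mul_nonneg (by norm_num) (hRQ.sqrt_mul_inv_mul_sqrt hRC).trace_sub_log_det_sub_card_nonneg

lemma centeredGaussianKL_eq_zero_iff : centeredGaussianKL RQ RC = 0 ↔ RC = RQ := by
  have hS : CFC.sqrt RQ * CFC.sqrt RQ = RQ := CFC.sqrt_mul_sqrt_self RQ hRQ.posSemidef.nonneg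
  rw [centeredGaussianKL_eq_of_mul_self_eq hS, mul_eq_zero, or_iff_right (by norm_num),
    (hRQ.sqrt_mul_inv_mul_sqrt hRC).trace_sub_log_det_sub_card_eq_zero_iff,
    mul_mul_self_eq_one_iff hRQ.isUnit_sqrt, hS]
  exact ⟨fun h => inv_inj h hRC.det_pos.ne'.isUnit, fun h => h ▸ rfl⟩

end

end Matrix

section Score

variable {n Ω : Type*} [Fintype n] [MeasurableSpace Ω] {μ : Measure Ω} {R : Matrix n n ℝ}
  {U : Ω → n → ℝ}

lemma integrable_dotProduct_mulVec (hU : ∀ i j, Integrable (fun ω => U ω i * U ω j) μ)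
    (A : Matrix n n ℝ) : Integrable (fun ω => U ω ⬝ᵥ (A *ᵥ U ω)) μ := by
  simp_rw [dotProduct_mulVec_self_eq_sum]
  exact integrable_finsetSum _ fun i _ => integrable_finsetSum _ fun j _ =>
    (hU i j).const_mul (A i j)

lemma integral_dotProduct_mulVec (hU : ∀ i j, Integrable (fun ω => U ω i * U ω j) μ)
    (hR : ∀ i j, ∫ ω, U ω i * U ω j ∂μ = R i j) (A : Matrix n n ℝ) :
    ∫ ω, U ω ⬝ᵥ (A *ᵥ U ω) ∂μ = (A * R).trace := by
  have hint : ∀ i j, Integrable (fun ω => A i j * (U ω i * U ω j)) μ :=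
    fun i j => (hU i j).const_mul (A i j)
  simp_rw [dotProduct_mulVec_self_eq_sum]
  rw [integral_finsetSum _ fun i _ => integrable_finsetSum _ fun j _ => hint i j]
  refine Finset.sum_congr rfl fun i _ => ?_
  rw [integral_finsetSum _ fun j _ => hint i j]
  refine Finset.sum_congr rfl fun j _ => ?_
  simp_rw [integral_const_mul, ← hR j i, mul_comm (U _ j)]

variable [DecidableEq n]

noncomputable def gaussianCopulaScore (RC : Matrix n n ℝ) (u : n → ℝ) : ℝ :=
  ((1 : ℝ) / 2) * Real.log RC.det + (1 / 2) * (u ⬝ᵥ ((RC⁻¹ - 1) *ᵥ u))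

lemma integral_gaussianCopulaScore [IsProbabilityMeasure μ]
    (hU : ∀ i j, Integrable (fun ω => U ω i * U ω j) μ)
    (hR : ∀ i j, ∫ ω, U ω i * U ω j ∂μ = R i j) (RC : Matrix n n ℝ) :
    ∫ ω, gaussianCopulaScore RC (U ω) ∂μ
      = (1 / 2) * Real.log RC.det + (1 / 2) * ((RC⁻¹ * R).trace - R.trace) := by
  simp only [gaussianCopulaScore]
  rw [integral_add (integrable_const _) ((integrable_dotProduct_mulVec hU _).const_mul _),
    integral_const, integral_const_mul, integral_dotProduct_mulVec hU hR, Matrix.sub_mul,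
    trace_sub, Matrix.one_mul]
  simp

lemma integral_gaussianCopulaScore_eq_centeredGaussianKL_add [IsProbabilityMeasure μ]
    (hU : ∀ i j, Integrable (fun ω => U ω i * U ω j) μ)
    (hR : ∀ i j, ∫ ω, U ω i * U ω j ∂μ = R i j) (hRpos : R.PosDef) {RC : Matrix n n ℝ}
    (hRC : RC.PosDef) :
    ∫ ω, gaussianCopulaScore RC (U ω) ∂μ = centeredGaussianKL R RC
      + (1 / 2) * Real.log R.det + Fintype.card n / 2 - (1 / 2) * R.trace := by
  rw [integral_gaussianCopulaScore hU hR, centeredGaussianKL,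
    Real.log_div hRC.det_pos.ne' hRpos.det_pos.ne']
  ring

end Score

theorem gaussian_copula_score_proper_general
    {d : ℕ} {Ω : Type*} [MeasurableSpace Ω]
    (μ : Measure Ω) [IsProbabilityMeasure μ]
    (RQ : Matrix (Fin d) (Fin d) ℝ) (hRQ : RQ.PosDef)
    (U : Ω → Fin d → ℝ)
    (hU_int2 : ∀ i j, Integrable (fun ω => U ω i * U ω j) μ)
    (hcov : ∀ i j, (∫ ω, U ω i * U ω j ∂μ) = RQ i j) :
    ∀ RC : Matrix (Fin d) (Fin d) ℝ, RC.PosDef →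
      ((∫ ω, ((1 : ℝ) / 2) * Real.log RC.det
            + (1 / 2) * (U ω ⬝ᵥ ((RC⁻¹ - 1) *ᵥ U ω)) ∂μ)
          = (1 / 2) * (Real.log (RC.det / RQ.det) - (d : ℝ) + (RC⁻¹ * RQ).trace)
            + (1 / 2) * Real.log RQ.det + (d : ℝ) / 2 - (1 / 2) * RQ.trace)
      ∧ (0 ≤ (1 / 2) * (Real.log (RC.det / RQ.det) - (d : ℝ) + (RC⁻¹ * RQ).trace))
      ∧ ((1 / 2) * (Real.log (RC.det / RQ.det) - (d : ℝ) + (RC⁻¹ * RQ).trace) = 0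
          ↔ RC = RQ)
      ∧ ((∫ ω, ((1 : ℝ) / 2) * Real.log RQ.det
            + (1 / 2) * (U ω ⬝ᵥ ((RQ⁻¹ - 1) *ᵥ U ω)) ∂μ)
          ≤ ∫ ω, ((1 : ℝ) / 2) * Real.log RC.det
            + (1 / 2) * (U ω ⬝ᵥ ((RC⁻¹ - 1) *ᵥ U ω)) ∂μ)
      ∧ ((∫ ω, ((1 : ℝ) / 2) * Real.log RC.det
            + (1 / 2) * (U ω ⬝ᵥ ((RC⁻¹ - 1) *ᵥ U ω)) ∂μ)
          = (∫ ω, ((1 : ℝ) / 2) * Real.log RQ.det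
            + (1 / 2) * (U ω ⬝ᵥ ((RQ⁻¹ - 1) *ᵥ U ω)) ∂μ)
          ↔ RC = RQ) := by
  intro RC hRC
  have hscore : ∀ R : Matrix (Fin d) (Fin d) ℝ, R.PosDef →
      ∫ ω, ((1 : ℝ) / 2) * Real.log R.det + (1 / 2) * (U ω ⬝ᵥ ((R⁻¹ - 1) *ᵥ U ω)) ∂μ
        = centeredGaussianKL RQ R
          + (1 / 2) * Real.log RQ.det + d / 2 - (1 / 2) * RQ.trace := fun R hR => by
    have := integral_gaussianCopulaScore_eq_centeredGaussianKL_add hU_int2 hcov hRQ hR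
    rwa [Fintype.card_fin] at this
  have hKL : centeredGaussianKL RQ RC
      = (1 / 2) * (Real.log (RC.det / RQ.det) - d + (RC⁻¹ * RQ).trace) := by
    simp [centeredGaussianKL]
  have hKL_self : centeredGaussianKL RQ RQ = 0 := (centeredGaussianKL_eq_zero_iff hRQ hRQ).2 rfl
  rw [hscore RC hRC, hscore RQ hRQ, hKL_self, ← hKL]
  have hnonneg := centeredGaussianKL_nonneg hRQ hRC
  refine ⟨rfl, hnonneg, centeredGaussianKL_eq_zero_iff hRQ hRC, by linarith, ?_⟩
  rw [← centeredGaussianKL_eq_zero_iff hRQ hRC]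
  constructor <;> intro h <;> linarith

/-- Propriety (but not strict propriety) of the Gaussian copula score at the matrix
level.  `U` is a random vector in `ℝ^d` with mean `0` and covariance matrix `RQ`
(symmetric positive definite).  For every symmetric positive definite matrix `RC`,
the expected Gaussian copula score decomposes as the Kullback–Leibler divergence
between the centered normals with covariances `RQ` and `RC` plus a term not
depending on `RC`; the KL term is nonnegative and vanishes exactly when `RC = RQ`,
hence the expected score is minimized over positive definite matrices exactly at
`RC = RQ`. -/
theorem gaussian_copula_score_proper
    {d : ℕ} {Ω : Type*} [MeasurableSpace Ω]
    (μ : Measure Ω) [IsProbabilityMeasure μ]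
    (RQ : Matrix (Fin d) (Fin d) ℝ) (hRQ : RQ.PosDef)
    (U : Ω → Fin d → ℝ)
    (hU_meas : Measurable U)
    (hU_int : ∀ i, Integrable (fun ω => U ω i) μ)
    (hU_int2 : ∀ i j, Integrable (fun ω => U ω i * U ω j) μ)
    (hmean : ∀ i, (∫ ω, U ω i ∂μ) = 0)
    (hcov : ∀ i j, (∫ ω, U ω i * U ω j ∂μ) = RQ i j) :
    ∀ RC : Matrix (Fin d) (Fin d) ℝ, RC.PosDef →
      ((∫ ω, ((1 : ℝ) / 2) * Real.log RC.det
            + (1 / 2) * (U ω ⬝ᵥ ((RC⁻¹ - 1) *ᵥ U ω)) ∂μ)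
          = (1 / 2) * (Real.log (RC.det / RQ.det) - (d : ℝ) + (RC⁻¹ * RQ).trace)
            + (1 / 2) * Real.log RQ.det + (d : ℝ) / 2 - (1 / 2) * RQ.trace)
      ∧ (0 ≤ (1 / 2) * (Real.log (RC.det / RQ.det) - (d : ℝ) + (RC⁻¹ * RQ).trace))
      ∧ ((1 / 2) * (Real.log (RC.det / RQ.det) - (d : ℝ) + (RC⁻¹ * RQ).trace) = 0
          ↔ RC = RQ)
      ∧ ((∫ ω, ((1 : ℝ) / 2) * Real.log RQ.det
            + (1 / 2) * (U ω ⬝ᵥ ((RQ⁻¹ - 1) *ᵥ U ω)) ∂μ)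
          ≤ ∫ ω, ((1 : ℝ) / 2) * Real.log RC.det
            + (1 / 2) * (U ω ⬝ᵥ ((RC⁻¹ - 1) *ᵥ U ω)) ∂μ)
      ∧ ((∫ ω, ((1 : ℝ) / 2) * Real.log RC.det
            + (1 / 2) * (U ω ⬝ᵥ ((RC⁻¹ - 1) *ᵥ U ω)) ∂μ)
          = (∫ ω, ((1 : ℝ) / 2) * Real.log RQ.det
            + (1 / 2) * (U ω ⬝ᵥ ((RQ⁻¹ - 1) *ᵥ U ω)) ∂μ)
          ↔ RC = RQ) :=
  gaussian_copula_score_proper_general μ RQ hRQ U hU_int2 hcov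
end
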